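/- arXiv:2104.01080 — 5 statements merged into one kernel-verified Lean document; each statement's English description precedes it below -/
import Mathlib

section
/- Let T > 0 and let θ : ℝ → ℝ be continuously differentiable with sup|θ| and sup|θ'| finite. Define V₀ₖ(t,x) = e^{-k² t} ( θ(x) cos(kx) - 2 k t θ'(x) sin(kx) ). Then for every integer k ≥ 1, ∫₀ᵀ ‖V₀ₖ(t,·)‖_{L²(0,π)} dt ≤ √π ( sup|θ| + 2 sup|θ'| ) / k². -/
/-!
Since `|θ| ≤ A` and `|θ'| ≤ B`, for `t ≥ 0` the integrand obeys `|V₀ₖ(t,x)| ≤ e^{-k²t}(A + 2ktB)`,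
so `‖V₀ₖ(t,·)‖_{L²(0,π)} ≤ √π e^{-k²t}(A + 2ktB)`. Bounding the time integral over `(0,T)` by
the Gamma integrals `∫₀^∞ tⁿ e^{-ct} dt = n!/c^{n+1}` gives `√π (A/k² + 2B/k³)`, which is at most
`√π (A + 2B)/k²` as `k ≥ 1`.
-/

open Real MeasureTheory intervalIntegral Set

lemma intervalIntegral_mono_of_nonneg {f g : ℝ → ℝ} {a b : ℝ} (hab : a ≤ b)
    (hf : ∀ x ∈ Ioc a b, 0 ≤ f x) (hg : IntervalIntegrable g volume a b)
    (hfg : ∀ x ∈ Ioc a b, f x ≤ g x) :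
    ∫ x in a..b, f x ≤ ∫ x in a..b, g x := by
  rw [integral_of_le hab, integral_of_le hab]
  exact integral_mono_of_nonneg ((ae_restrict_iff' measurableSet_Ioc).2 (.of_forall hf)) hg.1
    ((ae_restrict_iff' measurableSet_Ioc).2 (.of_forall hfg))

lemma sqrt_integral_sq_le_of_abs_le {f : ℝ → ℝ} {a b M : ℝ} (hab : a ≤ b) (hM : 0 ≤ M)
    (hf : ∀ x ∈ Ioc a b, |f x| ≤ M) :
    √(∫ x in a..b, f x ^ 2) ≤ √(b - a) * M := by
  have hsq : ∫ x in a..b, f x ^ 2 ≤ (b - a) * M ^ 2 :=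
    calc ∫ x in a..b, f x ^ 2 ≤ ∫ _ in a..b, M ^ 2 :=
          intervalIntegral_mono_of_nonneg hab (fun _ _ ↦ sq_nonneg _) intervalIntegrable_const
            fun x hx ↦ by simpa using pow_le_pow_left₀ (abs_nonneg _) (hf x hx) 2
      _ = (b - a) * M ^ 2 := by simp
  calc √(∫ x in a..b, f x ^ 2) ≤ √((b - a) * M ^ 2) := sqrt_le_sqrt hsq
    _ = √(b - a) * M := by rw [sqrt_mul (sub_nonneg.2 hab), sqrt_sq hM]

lemma abs_mul_cos_sub_mul_sin_le {a b A B s y z : ℝ} (ha : |a| ≤ A) (hb : |b| ≤ B)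
    (hs : 0 ≤ s) : |a * cos y - s * b * sin z| ≤ A + s * B :=
  calc |a * cos y - s * b * sin z| ≤ |a| * |cos y| + s * (|b| * |sin z|) := by
        simpa [abs_mul, abs_of_nonneg hs, mul_assoc] using abs_sub (a * cos y) (s * b * sin z)
    _ ≤ A * 1 + s * (B * 1) := by
        have hA : 0 ≤ A := (abs_nonneg a).trans ha
        have hB : 0 ≤ B := (abs_nonneg b).trans hb
        gcongr
        exacts [abs_cos_le_one y, abs_sin_le_one z]
    _ = A + s * B := by ring

lemma intervalIntegral_exp_neg_mul_mul_affine_le {c a b T : ℝ} (hc : 0 < c) (ha : 0 ≤ a)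
    (hb : 0 ≤ b) (hT : 0 ≤ T) :
    ∫ t in 0..T, exp (-c * t) * (a + b * t) ≤ a / c + b / c ^ 2 := by
  have h₀ : ∫ t in 0..T, exp (-(c * t)) ≤ 1 / c := by
    simpa using intervalIntegral_pow_mul_exp_neg_le (k := 0) hT hc
  have h₁ : ∫ t in 0..T, t * exp (-(c * t)) ≤ 1 / c ^ 2 := by
    simpa using intervalIntegral_pow_mul_exp_neg_le (k := 1) hT hc
  have hsplit : ∫ t in 0..T, exp (-c * t) * (a + b * t) =
      a * (∫ t in 0..T, exp (-(c * t))) + b * ∫ t in 0..T, t * exp (-(c * t)) := by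
    rw [← intervalIntegral.integral_const_mul, ← intervalIntegral.integral_const_mul,
      ← intervalIntegral.integral_add]
    · congr 1 with t; ring_nf
    all_goals exact (by fun_prop : Continuous _).intervalIntegrable _ _
  calc _ ≤ a * (1 / c) + b * (1 / c ^ 2) := by rw [hsplit]; gcongr
    _ = a / c + b / c ^ 2 := by ring

lemma intervalIntegral_exp_neg_sq_mul_affine_le {k A B T : ℝ} (hk : 1 ≤ k) (hA : 0 ≤ A)
    (hB : 0 ≤ B) (hT : 0 ≤ T) :
    ∫ t in 0..T, exp (-k ^ 2 * t) * (A + 2 * k * t * B) ≤ (A + 2 * B) / k ^ 2 :=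
  calc ∫ t in 0..T, exp (-k ^ 2 * t) * (A + 2 * k * t * B)
      = ∫ t in 0..T, exp (-k ^ 2 * t) * (A + 2 * k * B * t) := by congr 1 with t; ring
    _ ≤ A / k ^ 2 + 2 * k * B / (k ^ 2) ^ 2 :=
        intervalIntegral_exp_neg_mul_mul_affine_le (by positivity) hA (by positivity) hT
    _ ≤ (A + 2 * B) / k ^ 2 := by
        rw [div_add_div _ _ (by positivity) (by positivity),
          div_le_div_iff₀ (by positivity) (by positivity)]
        nlinarith [mul_nonneg hB (sub_nonneg.2 hk), pow_pos (by positivity : 0 < k) 6]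

theorem stmt_2_general (T : ℝ) (θ : ℝ → ℝ)
    (A B : ℝ) (hA : ∀ x : ℝ, |θ x| ≤ A) (hB : ∀ x : ℝ, |deriv θ x| ≤ B)
    (V : ℕ → ℝ → ℝ → ℝ)
    (hV : ∀ (k : ℕ) (t x : ℝ), V k t x =
      Real.exp (-(k : ℝ) ^ 2 * t) *
        (θ x * Real.cos (k * x) - 2 * (k : ℝ) * t * deriv θ x * Real.sin (k * x)))
    (k : ℕ) (hk : 1 ≤ k) :
    ∫ t in (0 : ℝ)..T, Real.sqrt (∫ x in (0 : ℝ)..π, (V k t x) ^ 2)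
      ≤ Real.sqrt π * (A + 2 * B) / (k : ℝ) ^ 2 := by
  have hA₀ : 0 ≤ A := (abs_nonneg _).trans (hA 0)
  have hB₀ : 0 ≤ B := (abs_nonneg _).trans (hB 0)
  rcases le_total T 0 with hT | hT
  · have := integral_nonneg_of_forall (μ := volume) hT
      fun t ↦ sqrt_nonneg (∫ x in (0 : ℝ)..π, V k t x ^ 2)
    rw [integral_symm]
    exact (neg_nonpos.2 this).trans (by positivity)
  have hV_le : ∀ t ≥ 0, ∀ x, |V k t x| ≤ exp (-(k : ℝ) ^ 2 * t) * (A + 2 * k * t * B) :=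
    fun t ht x ↦ by
      rw [hV, abs_mul, abs_exp]
      exact mul_le_mul_of_nonneg_left
        (abs_mul_cos_sub_mul_sin_le (hA x) (hB x) (by positivity)) (exp_pos _).le
  have hL2 : ∀ t ∈ Ioc 0 T, √(∫ x in (0 : ℝ)..π, V k t x ^ 2) ≤
      √π * (exp (-(k : ℝ) ^ 2 * t) * (A + 2 * k * t * B)) := fun t ht ↦ by
    have ht₀ : 0 ≤ t := ht.1.le
    simpa only [sub_zero] using
      sqrt_integral_sq_le_of_abs_le pi_pos.le (by positivity) fun x _ ↦ hV_le t ht₀ x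
  calc ∫ t in (0 : ℝ)..T, √(∫ x in (0 : ℝ)..π, V k t x ^ 2)
      ≤ ∫ t in (0 : ℝ)..T, √π * (exp (-(k : ℝ) ^ 2 * t) * (A + 2 * k * t * B)) :=
        intervalIntegral_mono_of_nonneg hT (fun _ _ ↦ sqrt_nonneg _)
          ((by fun_prop : Continuous _).intervalIntegrable _ _) hL2
    _ ≤ √π * ((A + 2 * B) / (k : ℝ) ^ 2) := by
        rw [intervalIntegral.integral_const_mul]
        gcongr
        exact intervalIntegral_exp_neg_sq_mul_affine_le (by exact_mod_cast hk) hA₀ hB₀ hT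
    _ = √π * (A + 2 * B) / (k : ℝ) ^ 2 := (mul_div_assoc ..).symm

/-- First source-term estimate: with
`V₀ₖ(t,x) = e^{-k²t}(θ(x)cos(kx) - 2kt θ'(x) sin(kx))` one has
`∫₀ᵀ ‖V₀ₖ(t,·)‖_{L²(0,π)} dt ≤ √π (sup|θ| + 2 sup|θ'|)/k²`. -/
theorem stmt_2 (T : ℝ) (hT : 0 < T) (θ : ℝ → ℝ) (hθ : ContDiff ℝ 1 θ)
    (A B : ℝ) (hA : ∀ x : ℝ, |θ x| ≤ A) (hB : ∀ x : ℝ, |deriv θ x| ≤ B)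
    (V : ℕ → ℝ → ℝ → ℝ)
    (hV : ∀ (k : ℕ) (t x : ℝ), V k t x =
      Real.exp (-(k : ℝ) ^ 2 * t) *
        (θ x * Real.cos (k * x) - 2 * (k : ℝ) * t * deriv θ x * Real.sin (k * x)))
    (k : ℕ) (hk : 1 ≤ k) :
    ∫ t in (0 : ℝ)..T, Real.sqrt (∫ x in (0 : ℝ)..π, (V k t x) ^ 2)
      ≤ Real.sqrt π * (A + 2 * B) / (k : ℝ) ^ 2 :=
  stmt_2_general T θ A B hA hB V hV k hk
end

section
/- Let T > 0, M ≥ 0, let φ : [0,T] → ℝ be continuous and nonnegative, and let g : [0,T] → ℝ be differentiable, nonnegative, with g(0) = 0, and satisfying (1/2) g'(t) ≤ M g(t) + √(g(t)) φ(t) for every t ∈ [0,T]. Then for every t ∈ [0,T], √(g(t)) ≤ e^{M t} ∫₀ᵗ e^{-M s} φ(s) ds. -/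
open Real Set intervalIntegral

/-- Gronwall-type differential inequality: if `g ≥ 0`, `g(0) = 0` and
`(1/2) g' ≤ M g + √g · φ` on `[0,T]`, then `√(g t) ≤ e^{Mt} ∫₀ᵗ e^{-Ms} φ(s) ds`. -/
theorem stmt_5 (T M : ℝ) (hT : 0 < T) (hM : 0 ≤ M)
    (φ : ℝ → ℝ) (hφcont : ContinuousOn φ (Icc 0 T))
    (hφpos : ∀ t ∈ Icc (0 : ℝ) T, 0 ≤ φ t)
    (g g' : ℝ → ℝ)
    (hg : ∀ t ∈ Icc (0 : ℝ) T, HasDerivAt g (g' t) t)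
    (hgpos : ∀ t ∈ Icc (0 : ℝ) T, 0 ≤ g t)
    (hg0 : g 0 = 0)
    (hineq : ∀ t ∈ Icc (0 : ℝ) T, (1 / 2) * g' t ≤ M * g t + Real.sqrt (g t) * φ t) :
    ∀ t ∈ Icc (0 : ℝ) T,
      Real.sqrt (g t) ≤ Real.exp (M * t) * ∫ s in (0 : ℝ)..t, Real.exp (-M * s) * φ s := by
  -- extend φ continuously to all of ℝ by clamping the argument to [0,T]
  set ψ : ℝ → ℝ := fun s => φ (min (max s 0) T) with hψdef
  have hclamp : ∀ s : ℝ, min (max s 0) T ∈ Icc (0 : ℝ) T := fun s =>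
    ⟨le_min (le_max_right s 0) hT.le, min_le_right _ _⟩
  have hψcont : Continuous ψ :=
    hφcont.comp_continuous
      ((continuous_id.max continuous_const).min continuous_const) hclamp
  have hψeq : ∀ s ∈ Icc (0 : ℝ) T, ψ s = φ s := by
    intro s hs
    simp only [hψdef]
    rw [max_eq_left hs.1, min_eq_left hs.2]
  have hint : Continuous fun s => Real.exp (-M * s) * ψ s := by
    exact (Real.continuous_exp.comp (continuous_const.mul continuous_id)).mul hψcont
  -- key estimate with ε-regularization
  have key : ∀ ε : ℝ, 0 < ε → ∀ t ∈ Icc (0 : ℝ) T,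
      Real.exp (-M * t) * Real.sqrt (g t + ε) ≤
        Real.sqrt ε + ∫ s in (0 : ℝ)..t, Real.exp (-M * s) * ψ s := by
    intro ε hε
    set F : ℝ → ℝ := fun t =>
      Real.exp (-M * t) * Real.sqrt (g t + ε) -
        ∫ s in (0 : ℝ)..t, Real.exp (-M * s) * ψ s with hFdef
    have hgε : ∀ t ∈ Icc (0 : ℝ) T, 0 < g t + ε := fun t ht => by
      linarith [hgpos t ht]
    have hFderiv : ∀ t ∈ Icc (0 : ℝ) T, HasDerivAt F
        (Real.exp (-M * t) * (-M) * Real.sqrt (g t + ε)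
          + Real.exp (-M * t) * (g' t / (2 * Real.sqrt (g t + ε)))
          - Real.exp (-M * t) * ψ t) t := by
      intro t ht
      have hA : HasDerivAt (fun t : ℝ => Real.exp (-M * t))
          (Real.exp (-M * t) * (-M)) t := by
        simpa using ((hasDerivAt_id t).const_mul (-M)).exp
      have hB : HasDerivAt (fun t => Real.sqrt (g t + ε))
          (g' t / (2 * Real.sqrt (g t + ε))) t :=
        ((hg t ht).add_const ε).sqrt (ne_of_gt (hgε t ht))
      have hC : HasDerivAt (fun u => ∫ s in (0 : ℝ)..u, Real.exp (-M * s) * ψ s)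
          (Real.exp (-M * t) * ψ t) t :=
        intervalIntegral.integral_hasDerivAt_right (hint.intervalIntegrable 0 t)
          (hint.stronglyMeasurableAtFilter MeasureTheory.volume (nhds t)) hint.continuousAt
      exact (hA.mul hB).sub hC
    have hanti : AntitoneOn F (Icc 0 T) := by
      apply antitoneOn_of_deriv_nonpos (convex_Icc 0 T)
      · intro t ht
        exact (hFderiv t ht).continuousAt.continuousWithinAt
      · intro t ht
        rw [interior_Icc] at ht
        exact (hFderiv t (Ioo_subset_Icc_self ht)).differentiableAt.differentiableWithinAt
      · intro t ht
        rw [interior_Icc] at ht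
        have ht' := Ioo_subset_Icc_self ht
        rw [(hFderiv t ht').deriv]
        have hu : 0 < Real.sqrt (g t + ε) := Real.sqrt_pos.mpr (hgε t ht')
        have h1 : g' t / (2 * Real.sqrt (g t + ε)) ≤
            M * Real.sqrt (g t + ε) + ψ t := by
          have h2 := hineq t ht'
          have hsg : Real.sqrt (g t) ≤ Real.sqrt (g t + ε) :=
            Real.sqrt_le_sqrt (by linarith)
          have hsq : Real.sqrt (g t + ε) ^ 2 = g t + ε :=
            Real.sq_sqrt (hgε t ht').le
          rw [hψeq t ht', div_le_iff₀ (by positivity)]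
          nlinarith [hφpos t ht', Real.sqrt_nonneg (g t),
            mul_le_mul_of_nonneg_right hsg (hφpos t ht'),
            mul_nonneg hM hε.le]
        have hexp : (0 : ℝ) < Real.exp (-M * t) := Real.exp_pos _
        nlinarith [mul_le_mul_of_nonneg_left h1 hexp.le]
    intro t ht
    have hF0 : F 0 = Real.sqrt ε := by
      simp [hFdef, hg0]
    have h := hanti (left_mem_Icc.mpr hT.le) ht ht.1
    rw [hF0] at h
    simp only [hFdef] at h
    linarith
  -- take ε → 0
  intro t ht
  have hI : (∫ s in (0 : ℝ)..t, Real.exp (-M * s) * ψ s) =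
      ∫ s in (0 : ℝ)..t, Real.exp (-M * s) * φ s := by
    apply intervalIntegral.integral_congr
    intro s hs
    rw [uIcc_of_le ht.1] at hs
    show Real.exp (-M * s) * ψ s = Real.exp (-M * s) * φ s
    rw [hψeq s ⟨hs.1, hs.2.trans ht.2⟩]
  refine le_of_forall_pos_le_add ?_
  intro δ hδ
  set ε : ℝ := (δ * Real.exp (-M * t)) ^ 2 with hεdef
  have hεpos : 0 < ε := by positivity
  have h := key ε hεpos t ht
  have hsqε : Real.sqrt ε = δ * Real.exp (-M * t) :=
    Real.sqrt_sq (by positivity)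
  rw [hsqε, hI] at h
  have hexp : Real.exp (M * t) * Real.exp (-M * t) = 1 := by
    rw [← Real.exp_add]; ring_nf; exact Real.exp_zero
  have hsg : Real.sqrt (g t) ≤ Real.sqrt (g t + ε) :=
    Real.sqrt_le_sqrt (by linarith)
  calc Real.sqrt (g t) ≤ Real.sqrt (g t + ε) := hsg
    _ = Real.exp (M * t) * (Real.exp (-M * t) * Real.sqrt (g t + ε)) := by
        rw [← mul_assoc, hexp, one_mul]
    _ ≤ Real.exp (M * t) *
          (δ * Real.exp (-M * t) + ∫ s in (0 : ℝ)..t, Real.exp (-M * s) * φ s) :=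
        mul_le_mul_of_nonneg_left h (Real.exp_pos _).le
    _ = Real.exp (M * t) * (∫ s in (0 : ℝ)..t, Real.exp (-M * s) * φ s) + δ := by
        linear_combination δ * hexp
end

section
/- Let T > 0 and M₀ ≥ 0. Let W, S : [0,T] × [0,π] → ℝ be continuous with |W(t,x)| ≤ M₀ for all (t,x). Let R : [0,T] × [0,π] → ℝ be continuous, continuously differentiable in t and twice continuously differentiable in x, satisfying: R(0,x) = 0 for all x ∈ [0,π]; the Neumann boundary conditions ∂R/∂x (t,0) = ∂R/∂x (t,π) = 0 for all t ∈ [0,T]; and the equation ∂R/∂t (t,x) - ∂²R/∂x² (t,x) = W(t,x) R(t,x) + S(t,x) on [0,T] × [0,π]. Then for every t ∈ [0,T], ‖R(t,·)‖_{L²(0,π)} ≤ e^{M₀ t} ∫₀ᵗ e^{-M₀ s} ‖S(s,·)‖_{L²(0,π)} ds. -/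
/-!
Multiplying the equation by `R` and integrating by parts in `x`, where the Neumann conditions kill
the boundary terms, the energy `E(t) = ‖R(t,·)‖²` satisfies `E' ≤ 2 M₀ E + 2 √E ‖S(t,·)‖` by
`|W| ≤ M₀` and Cauchy–Schwarz. Formally `(√E)' ≤ M₀ √E + ‖S(t,·)‖`, and Gronwall gives the bound.
As `√E` need not be differentiable where `E = 0`, the argument is run on `√(E + ε²)`:
`e^{-M₀ t} √(E + ε²) - ∫₀ᵗ e^{-M₀ s} ‖S(s,·)‖ ds` is antitone, and then `ε → 0`.
-/

open Real Set MeasureTheory intervalIntegral Filter Topology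
open scoped Interval

theorem integral_mul_le_sqrt_mul_sqrt {α : Type*} [MeasurableSpace α] {μ : Measure α}
    {f g : α → ℝ} (hf : Integrable (fun x => f x ^ 2) μ) (hg : Integrable (fun x => g x ^ 2) μ)
    (hfg : Integrable (fun x => f x * g x) μ) :
    ∫ x, f x * g x ∂μ ≤ √(∫ x, f x ^ 2 ∂μ) * √(∫ x, g x ^ 2 ∂μ) := by
  set A := ∫ x, f x ^ 2 ∂μ
  set B := ∫ x, g x ^ 2 ∂μ
  set C := ∫ x, f x * g x ∂μ
  have hquad : ∀ l : ℝ, 0 ≤ A * (l * l) + -2 * C * l + B := by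
    intro l
    have hexpand : (fun x => (l * f x - g x) ^ 2)
        = fun x => l * l * f x ^ 2 + (-2 * l * (f x * g x) + g x ^ 2) := by
      ext x; ring
    have hnonneg : 0 ≤ ∫ x, (l * f x - g x) ^ 2 ∂μ := integral_nonneg fun x => sq_nonneg _
    have hrest : Integrable (fun x => -2 * l * (f x * g x) + g x ^ 2) μ :=
      (hfg.const_mul _).add hg
    rw [hexpand, integral_add (hf.const_mul _) hrest, integral_add (hfg.const_mul _) hg,
      MeasureTheory.integral_const_mul, MeasureTheory.integral_const_mul] at hnonneg
    linarith
  have hdisc : C ^ 2 ≤ A * B := by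
    have := discrim_le_zero hquad
    unfold discrim at this
    linarith
  rw [← Real.sqrt_mul (integral_nonneg fun x => sq_nonneg _)]
  exact (le_abs_self C).trans (Real.abs_le_sqrt hdisc)

theorem integral_mul_deriv_deriv_nonpos {u u' u'' : ℝ → ℝ} {a b : ℝ} (hab : a ≤ b)
    (hu : ∀ x ∈ Icc a b, HasDerivAt u (u' x) x) (hu' : ∀ x ∈ Icc a b, HasDerivAt u' (u'' x) x)
    (hu'' : IntervalIntegrable u'' volume a b) (ha : u' a = 0) (hb : u' b = 0) :
    ∫ x in a..b, u x * u'' x ≤ 0 := by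
  have hcont : ∀ {v v' : ℝ → ℝ}, (∀ x ∈ Icc a b, HasDerivAt v (v' x) x) →
      ContinuousOn v [[a, b]] := fun hv => by
    rw [uIcc_of_le hab]
    exact fun x hx => (hv x hx).continuousAt.continuousWithinAt
  have hIoo : Ioo (min a b) (max a b) ⊆ Icc a b := by
    rw [min_eq_left hab, max_eq_right hab]
    exact Ioo_subset_Icc_self
  rw [integral_mul_deriv_eq_deriv_mul_of_hasDerivAt (hcont hu) (hcont hu')
    (fun x hx => hu x (hIoo hx)) (fun x hx => hu' x (hIoo hx)) (hcont hu').intervalIntegrable hu'',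
    ha, hb]
  simp only [mul_zero, sub_zero, zero_sub, neg_nonpos]
  exact integral_nonneg hab fun x _ => mul_self_nonneg _

theorem integral_two_mul_le_of_neumann_heat_eq {r r' r'' rt w f : ℝ → ℝ} {a b M : ℝ}
    (hab : a ≤ b) (hr : ∀ x ∈ Icc a b, HasDerivAt r (r' x) x)
    (hr' : ∀ x ∈ Icc a b, HasDerivAt r' (r'' x) x) (hr'' : ContinuousOn r'' (Icc a b))
    (hw : ContinuousOn w (Icc a b)) (hf : ContinuousOn f (Icc a b))
    (hwM : ∀ x ∈ Icc a b, |w x| ≤ M) (ha : r' a = 0) (hb : r' b = 0)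
    (heq : ∀ x ∈ Icc a b, rt x - r'' x = w x * r x + f x) :
    ∫ x in a..b, 2 * r x * rt x ≤
      2 * M * (∫ x in a..b, r x ^ 2) +
        2 * √(∫ x in a..b, r x ^ 2) * √(∫ x in a..b, f x ^ 2) := by
  have hrc : ContinuousOn r (Icc a b) := fun x hx => (hr x hx).continuousAt.continuousWithinAt
  have hint : ∀ {g : ℝ → ℝ}, ContinuousOn g (Icc a b) → IntervalIntegrable g volume a b :=
    fun hg => hg.intervalIntegrable_of_Icc hab
  have hsplit : ∫ x in a..b, 2 * r x * rt x
      = 2 * (∫ x in a..b, r x * r'' x) + 2 * (∫ x in a..b, w x * r x ^ 2)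
        + 2 * ∫ x in a..b, r x * f x := by
    have hpointwise : EqOn (fun x => 2 * r x * rt x)
        (fun x => 2 * (r x * r'' x) + 2 * (w x * r x ^ 2) + 2 * (r x * f x)) [[a, b]] := by
      intro x hx
      rw [uIcc_of_le hab] at hx
      linear_combination 2 * r x * heq x hx
    rw [integral_congr hpointwise, intervalIntegral.integral_add, intervalIntegral.integral_add,
      intervalIntegral.integral_const_mul, intervalIntegral.integral_const_mul,
      intervalIntegral.integral_const_mul]
    all_goals exact hint (by fun_prop)
  have hdiffusion := integral_mul_deriv_deriv_nonpos hab hr hr' (hint hr'') ha hb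
  have hreaction : ∫ x in a..b, w x * r x ^ 2 ≤ M * ∫ x in a..b, r x ^ 2 := by
    rw [← intervalIntegral.integral_const_mul]
    exact integral_mono_on hab (hint (hw.mul (hrc.pow 2)))
      (hint (continuousOn_const.mul (hrc.pow 2))) fun x hx =>
        mul_le_mul_of_nonneg_right ((le_abs_self _).trans (hwM x hx)) (sq_nonneg _)
  have hsource : ∫ x in a..b, r x * f x ≤ √(∫ x in a..b, r x ^ 2) * √(∫ x in a..b, f x ^ 2) := by
    simp only [integral_of_le hab]
    have hint' : ∀ {g : ℝ → ℝ}, ContinuousOn g (Icc a b) → IntegrableOn g (Ioc a b) :=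
      fun hg => hg.integrableOn_Icc.mono_set Ioc_subset_Icc_self
    exact integral_mul_le_sqrt_mul_sqrt (hint' (hrc.pow 2)) (hint' (hf.pow 2)) (hint' (hrc.mul hf))
  rw [hsplit]
  linarith

theorem continuousOn_intervalIntegral_of_continuousOn_prod {X E : Type*} [TopologicalSpace X]
    [NormedAddCommGroup E] [NormedSpace ℝ E] {F : X → ℝ → E} {s : Set X} {a b : ℝ} (hab : a ≤ b)
    (hF : ContinuousOn (fun p : X × ℝ => F p.1 p.2) (s ×ˢ Icc a b)) :
    ContinuousOn (fun t => ∫ x in a..b, F t x) s := by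
  rw [continuousOn_iff_continuous_domRestrict]
  -- clamping `x` into `[a, b]` extends `F` continuously from `s × [a, b]` to `s × ℝ`
  let G : s → ℝ → E := fun t x => F t (projIcc a b hab x)
  have hG : Continuous (Function.uncurry G) :=
    hF.comp_continuous (f := fun p : s × ℝ => ((p.1 : X), (projIcc a b hab p.2 : ℝ)))
      (by fun_prop) fun p => mk_mem_prod p.1.2 (projIcc a b hab p.2).2
  convert continuous_parametric_intervalIntegral_of_continuous' (μ := volume) hG a b using 2
  refine integral_congr fun x hx => ?_
  rw [uIcc_of_le hab] at hx
  simp [G, projIcc_of_mem hab hx]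

theorem hasDerivAt_intervalIntegral_of_continuousOn_prod {E : Type*} [NormedAddCommGroup E]
    [NormedSpace ℝ E] {F F' : ℝ → ℝ → E} {s : Set ℝ} {a b t₀ : ℝ} (hab : a ≤ b)
    (hs : IsCompact s) (hs₀ : s ∈ 𝓝 t₀)
    (hF : ContinuousOn (fun p : ℝ × ℝ => F p.1 p.2) (s ×ˢ Icc a b))
    (hF' : ContinuousOn (fun p : ℝ × ℝ => F' p.1 p.2) (s ×ˢ Icc a b))
    (hderiv : ∀ t ∈ s, ∀ x ∈ Icc a b, HasDerivAt (fun t => F t x) (F' t x) t) :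
    HasDerivAt (fun t => ∫ x in a..b, F t x) (∫ x in a..b, F' t₀ x) t₀ := by
  obtain ⟨C, hC⟩ := (hs.prod isCompact_Icc).exists_bound_of_continuousOn hF'
  have hslice : ∀ {G : ℝ → ℝ → E}, ContinuousOn (fun p : ℝ × ℝ => G p.1 p.2) (s ×ˢ Icc a b) →
      ∀ t ∈ s, ContinuousOn (G t) (Icc a b) := fun hG t ht =>
    hG.comp (by fun_prop : Continuous fun x => (t, x)).continuousOn fun x hx => mk_mem_prod ht hx
  have huIoc : Ι a b ⊆ Icc a b := by
    rw [uIoc_of_le hab]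
    exact Ioc_subset_Icc_self
  have hmeas : ∀ {G : ℝ → ℝ → E}, ContinuousOn (fun p : ℝ × ℝ => G p.1 p.2) (s ×ˢ Icc a b) →
      ∀ t ∈ s, AEStronglyMeasurable (G t) (volume.restrict (Ι a b)) := fun hG t ht =>
    ((hslice hG t ht).mono huIoc).aestronglyMeasurable measurableSet_uIoc
  have ht₀ : t₀ ∈ s := mem_of_mem_nhds hs₀
  exact (hasDerivAt_integral_of_dominated_loc_of_deriv_le (bound := fun _ => C) hs₀
    (eventually_of_mem hs₀ (hmeas hF)) ((hslice hF t₀ ht₀).intervalIntegrable_of_Icc hab)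
    (hmeas hF' t₀ ht₀) (ae_of_all _ fun x hx t ht => hC (t, x) (mk_mem_prod ht (huIoc hx)))
    intervalIntegrable_const (ae_of_all _ fun x hx t ht => hderiv t ht x (huIoc hx))).2

theorem antitoneOn_exp_mul_sqrt_add_sq_sub_integral {E E' σ : ℝ → ℝ} {M T ε : ℝ} (hM : 0 ≤ M)
    (hT : 0 ≤ T) (hε : 0 < ε) (hE : ContinuousOn E (Icc 0 T)) (hσ : ContinuousOn σ (Icc 0 T))
    (hE_nonneg : ∀ t ∈ Ioo 0 T, 0 ≤ E t) (hσ_nonneg : ∀ t ∈ Ioo 0 T, 0 ≤ σ t)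
    (hE' : ∀ t ∈ Ioo 0 T, HasDerivAt E (E' t) t)
    (hle : ∀ t ∈ Ioo 0 T, E' t ≤ 2 * M * E t + 2 * √(E t) * σ t) :
    AntitoneOn (fun t => exp (-M * t) * √(E t + ε ^ 2) - ∫ s in 0..t, exp (-M * s) * σ s)
      (Icc 0 T) := by
  set q : ℝ → ℝ := fun s => exp (-M * s) * σ s
  have hq : ContinuousOn q (Icc 0 T) := by fun_prop
  have hP : ContinuousOn (fun t => ∫ s in 0..t, q s) (Icc 0 T) := by
    have := continuousOn_primitive_interval (μ := volume) (a := 0) (b := T)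
      (by rw [uIcc_of_le hT]; exact hq.integrableOn_Icc)
    rwa [uIcc_of_le hT] at this
  have hP' : ∀ t ∈ Ioo 0 T, HasDerivAt (fun t => ∫ s in 0..t, q s) (q t) t := fun t ht =>
    integral_hasDerivAt_right
      ((hq.mono (Icc_subset_Icc le_rfl ht.2.le)).intervalIntegrable_of_Icc ht.1.le)
      ((hq.mono Ioo_subset_Icc_self).stronglyMeasurableAtFilter isOpen_Ioo t ht)
      (hq.continuousAt (Icc_mem_nhds ht.1 ht.2))
  refine antitoneOn_of_hasDerivWithinAt_nonpos (convex_Icc 0 T) (by fun_prop) (f' := fun t =>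
      exp (-M * t) * -M * √(E t + ε ^ 2) + exp (-M * t) * (E' t / (2 * √(E t + ε ^ 2))) - q t)
    (fun t ht => ?_) (fun t ht => ?_) <;> rw [interior_Icc] at ht
  · have hexp : HasDerivAt (fun t => exp (-M * t)) (exp (-M * t) * -M) t := by
      simpa using ((hasDerivAt_id t).const_mul (-M)).exp
    have hsqrt := ((hE' t ht).add_const (ε ^ 2)).sqrt (by have := hE_nonneg t ht; positivity)
    exact ((hexp.mul hsqrt).sub (hP' t ht)).hasDerivWithinAt
  · have hX : 0 < E t + ε ^ 2 := by have := hE_nonneg t ht; positivity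
    have hsqrtE : √(E t) ≤ √(E t + ε ^ 2) := sqrt_le_sqrt (le_add_of_nonneg_right (sq_nonneg ε))
    have hrate : E' t / (2 * √(E t + ε ^ 2)) ≤ M * √(E t + ε ^ 2) + σ t := by
      rw [div_le_iff₀ (by positivity)]
      nlinarith [hle t ht, sq_sqrt hX.le, mul_le_mul_of_nonneg_right hsqrtE (hσ_nonneg t ht),
        mul_nonneg hM (sq_nonneg ε)]
    have hdamped_rate := mul_le_mul_of_nonneg_left hrate (exp_pos (-M * t)).le
    simp only [q]
    nlinarith

theorem sqrt_le_exp_mul_integral_of_hasDerivAt_le {E E' σ : ℝ → ℝ} {M T : ℝ} (hM : 0 ≤ M)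
    (hE : ContinuousOn E (Icc 0 T)) (hσ : ContinuousOn σ (Icc 0 T)) (hE₀ : E 0 = 0)
    (hE_nonneg : ∀ t ∈ Ioo 0 T, 0 ≤ E t) (hσ_nonneg : ∀ t ∈ Ioo 0 T, 0 ≤ σ t)
    (hE' : ∀ t ∈ Ioo 0 T, HasDerivAt E (E' t) t)
    (hle : ∀ t ∈ Ioo 0 T, E' t ≤ 2 * M * E t + 2 * √(E t) * σ t) :
    ∀ t ∈ Icc 0 T, √(E t) ≤ exp (M * t) * ∫ s in 0..t, exp (-M * s) * σ s := by
  intro t ht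
  have hT : 0 ≤ T := ht.1.trans ht.2
  have hdamped : exp (-M * t) * √(E t) ≤ ∫ s in 0..t, exp (-M * s) * σ s := by
    refine le_of_forall_pos_le_add fun ε hε => ?_
    have hanti := antitoneOn_exp_mul_sqrt_add_sq_sub_integral hM hT hε hE hσ hE_nonneg hσ_nonneg
      hE' hle (left_mem_Icc.2 hT) ht ht.1
    have hsqrt : √(E t) ≤ √(E t + ε ^ 2) := sqrt_le_sqrt (le_add_of_nonneg_right (sq_nonneg ε))
    simp only [hE₀, zero_add, mul_zero, exp_zero, one_mul, sqrt_sq hε.le, integral_same,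
      sub_zero] at hanti
    nlinarith [mul_le_mul_of_nonneg_left hsqrt (exp_pos (-M * t)).le]
  calc √(E t) = exp (M * t) * (exp (-M * t) * √(E t)) := by
        rw [← mul_assoc, ← exp_add, neg_mul, add_neg_cancel, exp_zero, one_mul]
    _ ≤ exp (M * t) * ∫ s in 0..t, exp (-M * s) * σ s := by gcongr

theorem stmt_6_general (T M₀ : ℝ) (hM₀ : 0 ≤ M₀)
    (W S : ℝ → ℝ → ℝ)
    (hWcont : ContinuousOn (fun p : ℝ × ℝ => W p.1 p.2) (Icc 0 T ×ˢ Icc 0 π))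
    (hScont : ContinuousOn (fun p : ℝ × ℝ => S p.1 p.2) (Icc 0 T ×ˢ Icc 0 π))
    (hWbdd : ∀ t ∈ Icc (0 : ℝ) T, ∀ x ∈ Icc (0 : ℝ) π, |W t x| ≤ M₀)
    (R Rt Rx Rxx : ℝ → ℝ → ℝ)
    (hRcont : ContinuousOn (fun p : ℝ × ℝ => R p.1 p.2) (Icc 0 T ×ˢ Icc 0 π))
    (hRtcont : ContinuousOn (fun p : ℝ × ℝ => Rt p.1 p.2) (Icc 0 T ×ˢ Icc 0 π))
    (hRxxcont : ContinuousOn (fun p : ℝ × ℝ => Rxx p.1 p.2) (Icc 0 T ×ˢ Icc 0 π))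
    (hRt : ∀ t ∈ Icc (0 : ℝ) T, ∀ x ∈ Icc (0 : ℝ) π, HasDerivAt (fun t' => R t' x) (Rt t x) t)
    (hRx : ∀ t ∈ Icc (0 : ℝ) T, ∀ x ∈ Icc (0 : ℝ) π, HasDerivAt (fun x' => R t x') (Rx t x) x)
    (hRxx : ∀ t ∈ Icc (0 : ℝ) T, ∀ x ∈ Icc (0 : ℝ) π, HasDerivAt (fun x' => Rx t x') (Rxx t x) x)
    (hR0 : ∀ x ∈ Icc (0 : ℝ) π, R 0 x = 0)
    (hNeu : ∀ t ∈ Icc (0 : ℝ) T, Rx t 0 = 0 ∧ Rx t π = 0)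
    (hEq : ∀ t ∈ Icc (0 : ℝ) T, ∀ x ∈ Icc (0 : ℝ) π,
      Rt t x - Rxx t x = W t x * R t x + S t x) :
    ∀ t ∈ Icc (0 : ℝ) T,
      Real.sqrt (∫ x in (0 : ℝ)..π, (R t x) ^ 2)
        ≤ Real.exp (M₀ * t) *
            ∫ s in (0 : ℝ)..t, Real.exp (-M₀ * s) * Real.sqrt (∫ x in (0 : ℝ)..π, (S s x) ^ 2) := by
  have hslice : ∀ {F : ℝ → ℝ → ℝ},
      ContinuousOn (fun p : ℝ × ℝ => F p.1 p.2) (Icc 0 T ×ˢ Icc 0 π) →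
        ∀ t ∈ Icc 0 T, ContinuousOn (F t) (Icc 0 π) := fun hF t ht =>
    hF.comp (by fun_prop : Continuous fun x => (t, x)).continuousOn fun x hx => mk_mem_prod ht hx
  have hE₀ : ∫ x in (0 : ℝ)..π, R 0 x ^ 2 = 0 := by
    refine (integral_congr (g := fun _ => (0 : ℝ)) fun x hx => ?_).trans integral_zero
    rw [uIcc_of_le pi_pos.le] at hx
    simp [hR0 x hx]
  refine sqrt_le_exp_mul_integral_of_hasDerivAt_le hM₀
    (continuousOn_intervalIntegral_of_continuousOn_prod pi_pos.le (hRcont.pow 2))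
    (continuousOn_intervalIntegral_of_continuousOn_prod pi_pos.le (hScont.pow 2)).sqrt hE₀
    (fun t _ => integral_nonneg pi_pos.le fun x _ => sq_nonneg _) (fun t _ => sqrt_nonneg _)
    (fun t ht => hasDerivAt_intervalIntegral_of_continuousOn_prod
      (F' := fun t x => 2 * R t x * Rt t x) pi_pos.le isCompact_Icc (Icc_mem_nhds ht.1 ht.2)
      (hRcont.pow 2) (by fun_prop) fun s hs x hx =>
        ((hRt s hs x hx).fun_pow 2).congr_deriv (by norm_num))
    fun t ht => ?_
  have ht : t ∈ Icc 0 T := Ioo_subset_Icc_self ht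
  exact integral_two_mul_le_of_neumann_heat_eq pi_pos.le (hRx t ht) (hRxx t ht)
    (hslice hRxxcont t ht) (hslice hWcont t ht) (hslice hScont t ht) (hWbdd t ht) (hNeu t ht).1
    (hNeu t ht).2 (hEq t ht)

/-- Parabolic energy estimate for the remainder: if `R` solves
`∂ₜR - ∂ₓₓR = W R + S` on `[0,T]×[0,π]` with `R(0,·) = 0`, Neumann boundary
conditions, and `|W| ≤ M₀`, then
`‖R(t,·)‖_{L²(0,π)} ≤ e^{M₀ t} ∫₀ᵗ e^{-M₀ s} ‖S(s,·)‖_{L²(0,π)} ds`. -/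
theorem stmt_6 (T M₀ : ℝ) (hT : 0 < T) (hM₀ : 0 ≤ M₀)
    (W S : ℝ → ℝ → ℝ)
    (hWcont : ContinuousOn (fun p : ℝ × ℝ => W p.1 p.2) (Icc 0 T ×ˢ Icc 0 π))
    (hScont : ContinuousOn (fun p : ℝ × ℝ => S p.1 p.2) (Icc 0 T ×ˢ Icc 0 π))
    (hWbdd : ∀ t ∈ Icc (0 : ℝ) T, ∀ x ∈ Icc (0 : ℝ) π, |W t x| ≤ M₀)
    (R Rt Rx Rxx : ℝ → ℝ → ℝ)
    (hRcont : ContinuousOn (fun p : ℝ × ℝ => R p.1 p.2) (Icc 0 T ×ˢ Icc 0 π))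
    (hRtcont : ContinuousOn (fun p : ℝ × ℝ => Rt p.1 p.2) (Icc 0 T ×ˢ Icc 0 π))
    (hRxcont : ContinuousOn (fun p : ℝ × ℝ => Rx p.1 p.2) (Icc 0 T ×ˢ Icc 0 π))
    (hRxxcont : ContinuousOn (fun p : ℝ × ℝ => Rxx p.1 p.2) (Icc 0 T ×ˢ Icc 0 π))
    (hRt : ∀ t ∈ Icc (0 : ℝ) T, ∀ x ∈ Icc (0 : ℝ) π, HasDerivAt (fun t' => R t' x) (Rt t x) t)
    (hRx : ∀ t ∈ Icc (0 : ℝ) T, ∀ x ∈ Icc (0 : ℝ) π, HasDerivAt (fun x' => R t x') (Rx t x) x)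
    (hRxx : ∀ t ∈ Icc (0 : ℝ) T, ∀ x ∈ Icc (0 : ℝ) π, HasDerivAt (fun x' => Rx t x') (Rxx t x) x)
    (hR0 : ∀ x ∈ Icc (0 : ℝ) π, R 0 x = 0)
    (hNeu : ∀ t ∈ Icc (0 : ℝ) T, Rx t 0 = 0 ∧ Rx t π = 0)
    (hEq : ∀ t ∈ Icc (0 : ℝ) T, ∀ x ∈ Icc (0 : ℝ) π,
      Rt t x - Rxx t x = W t x * R t x + S t x) :
    ∀ t ∈ Icc (0 : ℝ) T,
      Real.sqrt (∫ x in (0 : ℝ)..π, (R t x) ^ 2)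
        ≤ Real.exp (M₀ * t) *
            ∫ s in (0 : ℝ)..t, Real.exp (-M₀ * s) * Real.sqrt (∫ x in (0 : ℝ)..π, (S s x) ^ 2) :=
  stmt_6_general T M₀ hM₀ W S hWcont hScont hWbdd R Rt Rx Rxx hRcont hRtcont hRxxcont hRt hRx hRxx
    hR0 hNeu hEq
end

section
/- Let T > 0, M₀ ≥ 0, let θ : ℝ → ℝ be infinitely differentiable with compact support contained in the open interval (0,π), and let W : [0,T] × [0,π] → ℝ be continuous with |W(t,x)| ≤ M₀ for all (t,x). Then there exists a constant M > 0 (depending only on T, M₀ and θ) such that for every integer k ≥ 1 and every function h : [0,T] × [0,π] → ℝ that is continuous, continuously differentiable in t and twice continuously differentiable in x, satisfies the Neumann boundary conditions ∂h/∂x(t,0) = ∂h/∂x(t,π) = 0, the initial condition h(0,x) = θ(x) cos(kx), and the equation ∂h/∂t - ∂²h/∂x² = W h on [0,T] × [0,π], one has for every t ∈ [0,T]: ‖ h(t,·) - e^{-k² t}( θ(·) cos(k·) - 2 k t θ'(·) sin(k·) ) ‖_{L²(0,π)} ≤ M / k². -/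
open Real Set MeasureTheory intervalIntegral


noncomputable def vapp (K : ℝ) (θ : ℝ → ℝ) (t x : ℝ) : ℝ :=
  Real.exp (-K^2*t) * (θ x * Real.cos (K*x) - 2*K*t*deriv θ x * Real.sin (K*x))

noncomputable def vappT (K : ℝ) (θ : ℝ → ℝ) (t x : ℝ) : ℝ :=
  Real.exp (-K^2*t) * (-K^2*(θ x * Real.cos (K*x) - 2*K*t*deriv θ x * Real.sin (K*x))
    - 2*K*deriv θ x * Real.sin (K*x))

noncomputable def vappX (K : ℝ) (θ : ℝ → ℝ) (t x : ℝ) : ℝ :=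
  Real.exp (-K^2*t) * ((deriv θ x * Real.cos (K*x) - K * θ x * Real.sin (K*x))
    - 2*K*t*(deriv (deriv θ) x * Real.sin (K*x) + K * deriv θ x * Real.cos (K*x)))

noncomputable def vappXX (K : ℝ) (θ : ℝ → ℝ) (t x : ℝ) : ℝ :=
  Real.exp (-K^2*t) * ((deriv (deriv θ) x * Real.cos (K*x) - 2*K*deriv θ x*Real.sin (K*x)
      - K^2*θ x*Real.cos (K*x))
    - 2*K*t*(deriv (deriv (deriv θ)) x * Real.sin (K*x) + 2*K*deriv (deriv θ) x*Real.cos (K*x)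
      - K^2*deriv θ x*Real.sin (K*x)))

lemma hasDerivAt_cosK (K x : ℝ) :
    HasDerivAt (fun y => Real.cos (K*y)) (-(K * Real.sin (K*x))) x := by
  have := (Real.hasDerivAt_cos (K*x)).comp x ((hasDerivAt_id x).const_mul K)
  simpa [mul_comm, Function.comp_def] using this

lemma hasDerivAt_sinK (K x : ℝ) :
    HasDerivAt (fun y => Real.sin (K*y)) (K * Real.cos (K*x)) x := by
  have := (Real.hasDerivAt_sin (K*x)).comp x ((hasDerivAt_id x).const_mul K)
  simpa [mul_comm, Function.comp_def] using this

lemma hasDerivAt_vapp_t (K : ℝ) (θ : ℝ → ℝ) (t x : ℝ) :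
    HasDerivAt (fun s => vapp K θ s x) (vappT K θ t x) t := by
  have h1 : HasDerivAt (fun s : ℝ => Real.exp (-K^2*s)) (Real.exp (-K^2*t) * (-K^2)) t := by
    have := ((hasDerivAt_id t).const_mul (-K^2)).exp
    simpa [mul_comm] using this
  have h2 : HasDerivAt (fun s : ℝ => θ x * Real.cos (K*x) - 2*K*s*deriv θ x * Real.sin (K*x))
      (-(2*K*deriv θ x * Real.sin (K*x))) t := by
    have : HasDerivAt (fun s : ℝ => 2*K*s*deriv θ x * Real.sin (K*x))
        (2*K*deriv θ x * Real.sin (K*x)) t := by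
      have := (hasDerivAt_id t).const_mul (2*K)
      have := (this.mul_const (deriv θ x)).mul_const (Real.sin (K*x))
      simpa [mul_assoc, mul_comm] using this
    simpa using this.const_sub (θ x * Real.cos (K*x))
  have := h1.mul h2
  refine this.congr_deriv ?_
  simp only [vappT]; ring

lemma hasDerivAt_vapp_x (K : ℝ) (θ : ℝ → ℝ) (hθω : ContDiff ℝ (⊤ : ℕ∞) θ) (t x : ℝ) :
    HasDerivAt (fun y => vapp K θ t y) (vappX K θ t x) x := by
  have hθ : ContDiff ℝ (⊤:ℕ∞) θ := hθω.of_le (by simp)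
  have hd1 : HasDerivAt θ (deriv θ x) x := (hθ.differentiable (by simp) x).hasDerivAt
  have hθ' : ContDiff ℝ (⊤:ℕ∞) (deriv θ) := (contDiff_infty_iff_deriv.mp hθ).2
  have hd2 : HasDerivAt (deriv θ) (deriv (deriv θ) x) x :=
    (hθ'.differentiable (by simp) x).hasDerivAt
  have hA : HasDerivAt (fun y => θ y * Real.cos (K*y))
      (deriv θ x * Real.cos (K*x) + θ x * (-(K * Real.sin (K*x)))) x :=
    hd1.mul (hasDerivAt_cosK K x)
  have hB : HasDerivAt (fun y => 2*K*t*deriv θ y * Real.sin (K*y))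
      (2*K*t*deriv (deriv θ) x * Real.sin (K*x) + 2*K*t*deriv θ x * (K * Real.cos (K*x))) x := by
    have h0 : HasDerivAt (fun y => deriv θ y * Real.sin (K*y))
        (deriv (deriv θ) x * Real.sin (K*x) + deriv θ x * (K * Real.cos (K*x))) x :=
      hd2.mul (hasDerivAt_sinK K x)
    have h1 := h0.const_mul (2*K*t)
    have : (fun y => 2*K*t*deriv θ y * Real.sin (K*y))
        = (fun y => 2*K*t*(deriv θ y * Real.sin (K*y))) := by
      funext y; ring
    rw [this]
    refine h1.congr_deriv ?_; ring
  have H := (hA.sub hB).const_mul (Real.exp (-K^2*t))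
  have : (fun y => vapp K θ t y) = (fun y => Real.exp (-K^2*t) *
      (θ y * Real.cos (K*y) - 2*K*t*deriv θ y * Real.sin (K*y))) := by
    funext y; simp only [vapp]
  rw [this]
  refine H.congr_deriv ?_
  simp only [vappX]; ring

lemma hasDerivAt_vappX_x (K : ℝ) (θ : ℝ → ℝ) (hθω : ContDiff ℝ (⊤ : ℕ∞) θ) (t x : ℝ) :
    HasDerivAt (fun y => vappX K θ t y) (vappXX K θ t x) x := by
  have hθ : ContDiff ℝ (⊤:ℕ∞) θ := hθω.of_le (by simp)
  have hθ' : ContDiff ℝ (⊤:ℕ∞) (deriv θ) := (contDiff_infty_iff_deriv.mp hθ).2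
  have hθ'' : ContDiff ℝ (⊤:ℕ∞) (deriv (deriv θ)) := (contDiff_infty_iff_deriv.mp hθ').2
  have hd1 : HasDerivAt θ (deriv θ x) x := (hθ.differentiable (by simp) x).hasDerivAt
  have hd2 : HasDerivAt (deriv θ) (deriv (deriv θ) x) x :=
    (hθ'.differentiable (by simp) x).hasDerivAt
  have hd3 : HasDerivAt (deriv (deriv θ)) (deriv (deriv (deriv θ)) x) x :=
    (hθ''.differentiable (by simp) x).hasDerivAt
  have hA : HasDerivAt (fun y => deriv θ y * Real.cos (K*y) - K * θ y * Real.sin (K*y))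
      ((deriv (deriv θ) x * Real.cos (K*x) + deriv θ x * (-(K * Real.sin (K*x))))
        - ((K * deriv θ x) * Real.sin (K*x) + (K * θ x) * (K * Real.cos (K*x)))) x := by
    have h1 := hd2.mul (hasDerivAt_cosK K x)
    have h2 : HasDerivAt (fun y => K * θ y) (K * deriv θ x) x := hd1.const_mul K
    have h3 := h2.mul (hasDerivAt_sinK K x)
    exact h1.sub h3
  have hB : HasDerivAt
      (fun y => deriv (deriv θ) y * Real.sin (K*y) + K * deriv θ y * Real.cos (K*y))
      ((deriv (deriv (deriv θ)) x * Real.sin (K*x) + deriv (deriv θ) x * (K * Real.cos (K*x)))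
        + ((K * deriv (deriv θ) x) * Real.cos (K*x) + (K * deriv θ x) * (-(K * Real.sin (K*x))))) x := by
    have h1 := hd3.mul (hasDerivAt_sinK K x)
    have h2 : HasDerivAt (fun y => K * deriv θ y) (K * deriv (deriv θ) x) x := hd2.const_mul K
    have h3 := h2.mul (hasDerivAt_cosK K x)
    exact h1.add h3
  have H := (hA.sub (hB.const_mul (2*K*t))).const_mul (Real.exp (-K^2*t))
  have : (fun y => vappX K θ t y) = (fun y => Real.exp (-K^2*t) *
      ((deriv θ y * Real.cos (K*y) - K * θ y * Real.sin (K*y))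
        - 2*K*t*(deriv (deriv θ) y * Real.sin (K*y) + K * deriv θ y * Real.cos (K*y)))) := by
    funext y; simp only [vappX]
  rw [this]
  refine H.congr_deriv ?_
  simp only [vappXX]; ring

lemma cont_derivs (θ : ℝ → ℝ) (hθω : ContDiff ℝ (⊤ : ℕ∞) θ) :
    Continuous θ ∧ Continuous (deriv θ) ∧ Continuous (deriv (deriv θ)) ∧
      Continuous (deriv (deriv (deriv θ))) := by
  have hθ : ContDiff ℝ (⊤:ℕ∞) θ := hθω.of_le (by simp)
  have hθ' : ContDiff ℝ (⊤:ℕ∞) (deriv θ) := (contDiff_infty_iff_deriv.mp hθ).2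
  have hθ'' : ContDiff ℝ (⊤:ℕ∞) (deriv (deriv θ)) := (contDiff_infty_iff_deriv.mp hθ').2
  have hθ''' : ContDiff ℝ (⊤:ℕ∞) (deriv (deriv (deriv θ))) :=
    (contDiff_infty_iff_deriv.mp hθ'').2
  exact ⟨hθ.continuous, hθ'.continuous, hθ''.continuous, hθ'''.continuous⟩

lemma continuous_vapp (K : ℝ) (θ : ℝ → ℝ) (hθω : ContDiff ℝ (⊤ : ℕ∞) θ) :
    Continuous (fun p : ℝ × ℝ => vapp K θ p.1 p.2) := by
  obtain ⟨c0, c1, c2, c3⟩ := cont_derivs θ hθω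
  unfold vapp; fun_prop

lemma continuous_vappT (K : ℝ) (θ : ℝ → ℝ) (hθω : ContDiff ℝ (⊤ : ℕ∞) θ) :
    Continuous (fun p : ℝ × ℝ => vappT K θ p.1 p.2) := by
  obtain ⟨c0, c1, c2, c3⟩ := cont_derivs θ hθω
  unfold vappT; fun_prop

lemma continuous_vappX (K : ℝ) (θ : ℝ → ℝ) (hθω : ContDiff ℝ (⊤ : ℕ∞) θ) :
    Continuous (fun p : ℝ × ℝ => vappX K θ p.1 p.2) := by
  obtain ⟨c0, c1, c2, c3⟩ := cont_derivs θ hθω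
  unfold vappX; fun_prop

lemma continuous_vappXX (K : ℝ) (θ : ℝ → ℝ) (hθω : ContDiff ℝ (⊤ : ℕ∞) θ) :
    Continuous (fun p : ℝ × ℝ => vappXX K θ p.1 p.2) := by
  obtain ⟨c0, c1, c2, c3⟩ := cont_derivs θ hθω
  unfold vappXX; fun_prop

lemma derivs_vanish (θ : ℝ → ℝ) (hθsub : tsupport θ ⊆ Ioo 0 π) {y : ℝ}
    (hy : y ∉ Ioo 0 π) :
    θ y = 0 ∧ deriv θ y = 0 ∧ deriv (deriv θ) y = 0 ∧ deriv (deriv (deriv θ)) y = 0 := by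
  have h0 : y ∉ tsupport θ := fun hmem => hy (hθsub hmem)
  have hsub1 : tsupport (deriv θ) ⊆ tsupport θ :=
    closure_minimal support_deriv_subset (isClosed_closure)
  have hsub2 : tsupport (deriv (deriv θ)) ⊆ tsupport θ :=
    (closure_minimal support_deriv_subset isClosed_closure).trans hsub1
  have hsub3 : tsupport (deriv (deriv (deriv θ))) ⊆ tsupport θ :=
    (closure_minimal support_deriv_subset isClosed_closure).trans hsub2
  exact ⟨image_eq_zero_of_notMem_tsupport h0,
    image_eq_zero_of_notMem_tsupport (fun hh => h0 (hsub1 hh)),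
    image_eq_zero_of_notMem_tsupport (fun hh => h0 (hsub2 hh)),
    image_eq_zero_of_notMem_tsupport (fun hh => h0 (hsub3 hh))⟩

lemma vappX_boundary (k : ℕ) (θ : ℝ → ℝ) (hθsub : tsupport θ ⊆ Ioo 0 π) (t : ℝ) :
    vappX (k:ℝ) θ t 0 = 0 ∧ vappX (k:ℝ) θ t π = 0 := by
  obtain ⟨a0, a1, a2, a3⟩ := derivs_vanish θ hθsub (y := 0) (by simp)
  obtain ⟨b0, b1, b2, b3⟩ := derivs_vanish θ hθsub (y := π) (by simp)
  constructor
  · simp [vappX, a0, a1, a2]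
  · simp [vappX, b0, b1, b2, Real.sin_nat_mul_pi]

lemma vapp_zero (K : ℝ) (θ : ℝ → ℝ) (x : ℝ) : vapp K θ 0 x = θ x * Real.cos (K*x) := by
  simp [vapp]

lemma residual_eq (K : ℝ) (θ : ℝ → ℝ) (t x : ℝ) :
    vappT K θ t x - vappXX K θ t x
      = Real.exp (-K^2*t) * (-(deriv (deriv θ) x) * Real.cos (K*x)
          + 2*K*t*(deriv (deriv (deriv θ)) x * Real.sin (K*x)
            + 2*K*deriv (deriv θ) x * Real.cos (K*x))) := by
  simp only [vappT, vappXX]; ring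

lemma usq_exp_le (u : ℝ) (hu : 0 ≤ u) : u^2 * Real.exp (-u) ≤ 1 := by
  have h4 : Real.exp u = Real.exp (u/4) ^ (4:ℕ) := by
    rw [← Real.exp_nat_mul]; push_cast; ring_nf
  have h1 : u/4 + 1 ≤ Real.exp (u/4) := Real.add_one_le_exp _
  have e1 : u ≤ (u/4+1)^2 := by nlinarith [sq_nonneg (u/4-1)]
  have e2 : (u/4+1)^2 ≤ Real.exp (u/4)^2 := by nlinarith [h1, hu]
  have e3 : u ≤ Real.exp (u/4)^2 := e1.trans e2
  have h2 : u^2 ≤ Real.exp u := by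
    rw [h4]
    calc u^2 ≤ (Real.exp (u/4)^2)^2 := by nlinarith
      _ = Real.exp (u/4) ^ (4:ℕ) := by ring
  rw [Real.exp_neg]
  rw [mul_inv_le_iff₀ (Real.exp_pos u)]
  simpa using h2

lemma integral_exp_neg_le (c t : ℝ) (hc : 0 < c) (htt : 0 ≤ t) :
    ∫ s in (0:ℝ)..t, Real.exp (-c*s) ≤ 1/c := by
  have hder : ∀ s ∈ Set.uIcc (0:ℝ) t,
      HasDerivAt (fun w => -(1/c) * Real.exp (-c*w)) (Real.exp (-c*s)) s := by
    intro s _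
    have h1 : HasDerivAt (fun w : ℝ => -c*w) (-c) s := by
      simpa using (hasDerivAt_id s).const_mul (-c)
    have := (h1.exp).const_mul (-(1/c))
    refine this.congr_deriv ?_
    field_simp
  have hint : IntervalIntegrable (fun s => Real.exp (-c*s)) volume 0 t :=
    (by fun_prop : Continuous fun s : ℝ => Real.exp (-c*s)).intervalIntegrable 0 t
  rw [intervalIntegral.integral_eq_sub_of_hasDerivAt hder hint]
  simp only [mul_zero, neg_zero, Real.exp_zero]
  nlinarith [mul_pos (one_div_pos.mpr hc) (Real.exp_pos (-c*t))]

lemma gronwall_aux {T : ℝ} (hT : 0 < T) (E G β g Bf : ℝ → ℝ)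
    (hEc : ContinuousOn E (Icc 0 T)) (hE0 : E 0 = 0)
    (hE' : ∀ s ∈ Ioo 0 T, HasDerivAt E (G s) s)
    (hgc : Continuous g)
    (hBfc : Continuous Bf)
    (hBf' : ∀ s ∈ Ioo 0 T, HasDerivAt Bf (β s) s) (hBf0 : Bf 0 = 0)
    (hGle : ∀ s ∈ Ioo 0 T, G s ≤ β s * E s + g s) :
    ∀ t ∈ Icc 0 T, E t ≤ Real.exp (Bf t) * ∫ s in (0:ℝ)..t, Real.exp (-(Bf s)) * g s := by
  set ψ : ℝ → ℝ := fun s => Real.exp (-(Bf s)) * g s with hψdef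
  have hψc : Continuous ψ := by fun_prop
  set P : ℝ → ℝ := fun w => ∫ s in (0:ℝ)..w, ψ s with hPdef
  have hP : ∀ u : ℝ, HasDerivAt P (ψ u) u := by
    intro u
    exact intervalIntegral.integral_hasDerivAt_right (hψc.intervalIntegrable 0 u)
      (hψc.stronglyMeasurable.stronglyMeasurableAtFilter) hψc.continuousAt
  set Φ : ℝ → ℝ := fun u => Real.exp (-(Bf u)) * E u - P u with hΦdef
  have hΦc : ContinuousOn Φ (Icc 0 T) := by
    apply ContinuousOn.sub
    · exact ((Real.continuous_exp.comp hBfc.neg).continuousOn).mul hEc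
    · exact (continuous_iff_continuousAt.mpr fun u => (hP u).continuousAt).continuousOn
  have hΦd : ∀ u ∈ Ioo 0 T,
      HasDerivAt Φ (Real.exp (-(Bf u)) * (G u - β u * E u - g u)) u := by
    intro u hu
    have h1 : HasDerivAt (fun w => Real.exp (-(Bf w))) (Real.exp (-(Bf u)) * (-(β u))) u := by
      have := ((hBf' u hu).neg).exp
      simpa [mul_comm] using this
    have h2 := (h1.mul (hE' u hu)).sub (hP u)
    refine h2.congr_deriv ?_
    simp only [hψdef]; ring
  have hanti : AntitoneOn Φ (Icc 0 T) := by
    apply antitoneOn_of_deriv_nonpos (convex_Icc 0 T) hΦc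
    · intro u hu
      rw [interior_Icc] at hu
      exact (hΦd u hu).differentiableAt.differentiableWithinAt
    · intro u hu
      rw [interior_Icc] at hu
      rw [(hΦd u hu).deriv]
      have h3 := hGle u hu
      have h4 := Real.exp_pos (-(Bf u))
      nlinarith
  intro t htmem
  have h0mem : (0:ℝ) ∈ Icc 0 T := ⟨le_refl _, hT.le⟩
  have hΦt : Φ t ≤ Φ 0 := hanti h0mem htmem htmem.1
  have hΦ0 : Φ 0 = 0 := by
    simp [hΦdef, hPdef, hBf0, hE0]
  rw [hΦ0] at hΦt
  have hkey : Real.exp (-(Bf t)) * E t ≤ P t := by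
    simpa [hΦdef] using hΦt
  have hpos := Real.exp_pos (Bf t)
  have hid : Real.exp (Bf t) * Real.exp (-(Bf t)) = 1 := by
    rw [← Real.exp_add]; simp
  calc E t = Real.exp (Bf t) * (Real.exp (-(Bf t)) * E t) := by
        rw [← mul_assoc, hid, one_mul]
    _ ≤ Real.exp (Bf t) * P t := by
        exact mul_le_mul_of_nonneg_left hkey hpos.le


lemma abs_term_bound (a b d c : ℝ) (ha : 0 ≤ a) (hb : |b| ≤ c) (hd : |d| ≤ 1) :
    |a*b*d| ≤ a*c := by
  have hc : 0 ≤ c := (abs_nonneg b).trans hb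
  rw [abs_mul, abs_mul, abs_of_nonneg ha]
  have h1 : |b| * |d| ≤ c * 1 := mul_le_mul hb hd (abs_nonneg d) hc
  calc a * |b| * |d| = a * (|b| * |d|) := by ring
    _ ≤ a * (c*1) := mul_le_mul_of_nonneg_left h1 ha
    _ = a * c := by ring

lemma young_ineq (p q c : ℝ) (hc : 0 < c) : 2*p*q ≤ c*p^2 + q^2/c := by
  rw [← sub_nonneg]
  have hkey : c*p^2 + q^2/c - 2*p*q = (c*p - q)^2/c := by field_simp; ring
  rw [hkey]; positivity

set_option maxHeartbeats 4000000 in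
/-- Validity of the two-scale expansion in `L²`: solutions of
`∂ₜh - ∂ₓₓh = W h` with Neumann conditions and initial datum `θ(x)cos(kx)`
are approximated in `L²(0,π)`, uniformly in `t ∈ [0,T]`, up to `M/k²`, by
`e^{-k²t}(θ(x)cos(kx) - 2kt θ'(x) sin(kx))`. -/
theorem stmt_7 (T M₀ : ℝ) (hT : 0 < T) (hM₀ : 0 ≤ M₀)
    (θ : ℝ → ℝ) (hθ : ContDiff ℝ (⊤ : ℕ∞) θ) (hθsupp : HasCompactSupport θ)
    (hθsub : tsupport θ ⊆ Ioo 0 π)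
    (W : ℝ → ℝ → ℝ)
    (hWcont : ContinuousOn (fun p : ℝ × ℝ => W p.1 p.2) (Icc 0 T ×ˢ Icc 0 π))
    (hWbdd : ∀ t ∈ Icc (0 : ℝ) T, ∀ x ∈ Icc (0 : ℝ) π, |W t x| ≤ M₀) :
    ∃ M : ℝ, 0 < M ∧
      ∀ (k : ℕ), 1 ≤ k →
      ∀ (h ht hx hxx : ℝ → ℝ → ℝ),
        ContinuousOn (fun p : ℝ × ℝ => h p.1 p.2) (Icc 0 T ×ˢ Icc 0 π) →
        ContinuousOn (fun p : ℝ × ℝ => ht p.1 p.2) (Icc 0 T ×ˢ Icc 0 π) →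
        ContinuousOn (fun p : ℝ × ℝ => hx p.1 p.2) (Icc 0 T ×ˢ Icc 0 π) →
        ContinuousOn (fun p : ℝ × ℝ => hxx p.1 p.2) (Icc 0 T ×ˢ Icc 0 π) →
        (∀ t ∈ Icc (0 : ℝ) T, ∀ x ∈ Icc (0 : ℝ) π,
          HasDerivAt (fun t' => h t' x) (ht t x) t) →
        (∀ t ∈ Icc (0 : ℝ) T, ∀ x ∈ Icc (0 : ℝ) π,
          HasDerivAt (fun x' => h t x') (hx t x) x) →
        (∀ t ∈ Icc (0 : ℝ) T, ∀ x ∈ Icc (0 : ℝ) π,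
          HasDerivAt (fun x' => hx t x') (hxx t x) x) →
        (∀ t ∈ Icc (0 : ℝ) T, hx t 0 = 0 ∧ hx t π = 0) →
        (∀ x ∈ Icc (0 : ℝ) π, h 0 x = θ x * Real.cos (k * x)) →
        (∀ t ∈ Icc (0 : ℝ) T, ∀ x ∈ Icc (0 : ℝ) π, ht t x - hxx t x = W t x * h t x) →
        ∀ t ∈ Icc (0 : ℝ) T,
          Real.sqrt (∫ x in (0 : ℝ)..π,
              (h t x - Real.exp (-(k : ℝ) ^ 2 * t) *
                (θ x * Real.cos (k * x)
                  - 2 * (k : ℝ) * t * deriv θ x * Real.sin (k * x))) ^ 2)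
            ≤ M / (k : ℝ) ^ 2 := by
  classical
  obtain ⟨c0, c1, c2, c3⟩ := cont_derivs θ hθ
  obtain ⟨Cb, hCb0, hCbθ0, hCbθ1, hCbθ2, hCbθ3⟩ :
      ∃ C : ℝ, 0 ≤ C ∧ (∀ x, |θ x| ≤ C) ∧ (∀ x, |deriv θ x| ≤ C)
        ∧ (∀ x, |deriv (deriv θ) x| ≤ C) ∧ (∀ x, |deriv (deriv (deriv θ)) x| ≤ C) := by
    obtain ⟨C0, h0⟩ := hθsupp.exists_bound_of_continuous c0
    obtain ⟨C1, h1⟩ := hθsupp.deriv.exists_bound_of_continuous c1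
    obtain ⟨C2, h2⟩ := hθsupp.deriv.deriv.exists_bound_of_continuous c2
    obtain ⟨C3, h3⟩ := hθsupp.deriv.deriv.deriv.exists_bound_of_continuous c3
    simp only [Real.norm_eq_abs] at h0 h1 h2 h3
    refine ⟨max 0 (max (max C0 C1) (max C2 C3)), le_max_left _ _, fun x => ?_, fun x => ?_,
      fun x => ?_, fun x => ?_⟩
    · exact (h0 x).trans (((le_max_left C0 C1).trans (le_max_left _ _)).trans (le_max_right 0 _))
    · exact (h1 x).trans (((le_max_right C0 C1).trans (le_max_left _ _)).trans (le_max_right 0 _))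
    · exact (h2 x).trans (((le_max_left C2 C3).trans (le_max_right _ _)).trans (le_max_right 0 _))
    · exact (h3 x).trans (((le_max_right C2 C3).trans (le_max_right _ _)).trans (le_max_right 0 _))
  set A : ℝ := (M₀+1)*Cb with hAdef
  set Bc : ℝ := (2*M₀+6)*Cb with hBcdef
  have hA0 : 0 ≤ A := by positivity
  have hB0 : 0 ≤ Bc := by positivity
  set Cfin : ℝ := Real.exp (2*M₀*T+2) * (4*π*(A^2+Bc^2)) with hCfdef
  have hCfin0 : 0 ≤ Cfin := by positivity
  refine ⟨Real.sqrt Cfin + 1, by positivity, ?_⟩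
  intro k hk h ht hx hxx hhc hhtc hhxc hhxxc hdt hdx hdxx hbc hic hpde t htmem
  set K : ℝ := (k:ℝ) with hKdef
  have hK1 : (1:ℝ) ≤ K := by rw [hKdef]; exact_mod_cast hk
  have hKpos : (0:ℝ) < K := lt_of_lt_of_le one_pos hK1
  have hK2pos : (0:ℝ) < K^2 := by positivity
  have hKK : K ≤ K^2 := by nlinarith
  have hvc := continuous_vapp K θ hθ
  have hvtc := continuous_vappT K θ hθ
  have hvxc := continuous_vappX K θ hθ
  have hvxxc := continuous_vappXX K θ hθ
  -- abbreviations (as plain functions)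
  set r : ℝ → ℝ → ℝ := fun s x => h s x - vapp K θ s x with hrdef
  set rr : ℝ → ℝ → ℝ := fun s x => ht s x - vappT K θ s x with hrrdef
  set rx : ℝ → ℝ → ℝ := fun s x => hx s x - vappX K θ s x with hrxdef
  set rxx : ℝ → ℝ → ℝ := fun s x => hxx s x - vappXX K θ s x with hrxxdef
  set Fr : ℝ → ℝ → ℝ :=
    fun s x => W s x * vapp K θ s x - (vappT K θ s x - vappXX K θ s x) with hFdef
  set E : ℝ → ℝ := fun s => ∫ x in (0:ℝ)..π, (r s x)^2 with hEdef
  set G : ℝ → ℝ := fun s => ∫ x in (0:ℝ)..π, 2 * r s x * rr s x with hGdef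
  set βf : ℝ → ℝ := fun s => 2*M₀ + K^2 * Real.exp (-(K^2/2)*s) with hβdef
  set gf : ℝ → ℝ :=
    fun s => π * Real.exp (-(3/2)*(K^2*s)) * (A + Bc*(K^2*s))^2 / K^2 with hgdef
  set Bf : ℝ → ℝ := fun s => 2*M₀*s + 2 - 2*Real.exp (-(K^2/2)*s) with hBfdef
  -- continuity of r, rr on the rectangle
  have hrc : ContinuousOn (fun p : ℝ × ℝ => r p.1 p.2) (Icc 0 T ×ˢ Icc 0 π) :=
    hhc.sub hvc.continuousOn
  have hrrc : ContinuousOn (fun p : ℝ × ℝ => rr p.1 p.2) (Icc 0 T ×ˢ Icc 0 π) :=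
    hhtc.sub hvtc.continuousOn
  obtain ⟨Ch, hCh⟩ := (isCompact_Icc.prod isCompact_Icc).exists_bound_of_continuousOn hrc
  obtain ⟨Cht, hCht⟩ := (isCompact_Icc.prod isCompact_Icc).exists_bound_of_continuousOn hrrc
  simp only [Real.norm_eq_abs] at hCh hCht
  -- slice continuity
  have hslice : ∀ (f : ℝ → ℝ → ℝ), ContinuousOn (fun p : ℝ × ℝ => f p.1 p.2)
      (Icc 0 T ×ˢ Icc 0 π) → ∀ s ∈ Icc (0:ℝ) T, ContinuousOn (fun x => f s x) (Icc 0 π) := by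
    intro f hf s hs
    have hmap : MapsTo (fun x : ℝ => (s, x)) (Icc 0 π) (Icc 0 T ×ˢ Icc 0 π) :=
      fun x hxm => Set.mk_mem_prod hs hxm
    exact hf.comp ((continuous_const.prodMk continuous_id).continuousOn) hmap
  have htslice : ∀ (f : ℝ → ℝ → ℝ), ContinuousOn (fun p : ℝ × ℝ => f p.1 p.2)
      (Icc 0 T ×ˢ Icc 0 π) → ∀ x ∈ Icc (0:ℝ) π, ContinuousOn (fun s => f s x) (Icc 0 T) := by
    intro f hf x hxm
    have hmap : MapsTo (fun s : ℝ => (s, x)) (Icc 0 T) (Icc 0 T ×ˢ Icc 0 π) :=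
      fun s hs => Set.mk_mem_prod hs hxm
    exact hf.comp ((continuous_id.prodMk continuous_const).continuousOn) hmap
  -- initial value
  have hr0 : ∀ x ∈ Icc (0:ℝ) π, r 0 x = 0 := by
    intro x hxm
    simp only [hrdef, vapp_zero, hic x hxm, hKdef, sub_self]
  -- boundary values of rx
  have hrxbd : ∀ s ∈ Icc (0:ℝ) T, rx s 0 = 0 ∧ rx s π = 0 := by
    intro s hs
    obtain ⟨hb0, hbπ⟩ := hbc s hs
    obtain ⟨hv0, hvπ⟩ := vappX_boundary k θ hθsub s
    constructor
    · simp only [hrxdef, hb0, hKdef, hv0, sub_self]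
    · simp only [hrxdef, hbπ, hKdef, hvπ, sub_self]
  -- pointwise equation for rr
  have hptw : ∀ s ∈ Icc (0:ℝ) T, ∀ x ∈ Icc (0:ℝ) π,
      rr s x = rxx s x + W s x * r s x + Fr s x := by
    intro s hs x hxm
    have hp := hpde s hs x hxm
    simp only [hrrdef, hrxxdef, hrdef, hFdef]
    linear_combination hp
  -- bound on the forcing term
  have hFb : ∀ s ∈ Icc (0:ℝ) T, ∀ x ∈ Icc (0:ℝ) π,
      |Fr s x| ≤ Real.exp (-K^2*s) * (A + Bc*(K^2*s)) := by
    intro s hs x hxm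
    have hss : (0:ℝ) ≤ s := hs.1
    have he : (0:ℝ) < Real.exp (-K^2*s) := Real.exp_pos _
    have hW := hWbdd s hs x hxm
    have hKs : 0 ≤ 2*K*s := by positivity
    have h2Ks : 0 ≤ 2*K := by positivity
    have hv : |vapp K θ s x| ≤ Real.exp (-K^2*s) * (Cb + 2*K*s*Cb) := by
      have hsh : vapp K θ s x = Real.exp (-K^2*s) *
          (θ x * Real.cos (K*x) - 2*K*s*deriv θ x * Real.sin (K*x)) := rfl
      rw [hsh, abs_mul, abs_of_pos he]
      apply mul_le_mul_of_nonneg_left _ he.le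
      have t1 : |θ x * Real.cos (K*x)| ≤ Cb := by
        have := abs_term_bound 1 (θ x) (Real.cos (K*x)) Cb zero_le_one (hCbθ0 x)
          (Real.abs_cos_le_one _)
        simpa using this
      have t2 : |2*K*s*deriv θ x*Real.sin (K*x)| ≤ 2*K*s*Cb :=
        abs_term_bound (2*K*s) _ _ Cb hKs (hCbθ1 x) (Real.abs_sin_le_one _)
      calc |θ x * Real.cos (K*x) - 2*K*s*deriv θ x * Real.sin (K*x)|
          ≤ |θ x * Real.cos (K*x)| + |2*K*s*deriv θ x*Real.sin (K*x)| := abs_sub _ _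
        _ ≤ Cb + 2*K*s*Cb := add_le_add t1 t2
    have hR : |vappT K θ s x - vappXX K θ s x|
        ≤ Real.exp (-K^2*s) * (Cb + 2*K*s*(Cb + 2*K*Cb)) := by
      rw [residual_eq K θ s x, abs_mul, abs_of_pos he]
      apply mul_le_mul_of_nonneg_left _ he.le
      have t1 : |(-(deriv (deriv θ) x)) * Real.cos (K*x)| ≤ Cb := by
        have := abs_term_bound 1 (-(deriv (deriv θ) x)) (Real.cos (K*x)) Cb zero_le_one
          (by rw [abs_neg]; exact hCbθ2 x) (Real.abs_cos_le_one _)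
        simpa using this
      have t2 : |2*K*s*(deriv (deriv (deriv θ)) x * Real.sin (K*x)
          + 2*K*deriv (deriv θ) x * Real.cos (K*x))| ≤ 2*K*s*(Cb + 2*K*Cb) := by
        rw [abs_mul]
        have hin : |deriv (deriv (deriv θ)) x * Real.sin (K*x)
            + 2*K*deriv (deriv θ) x * Real.cos (K*x)| ≤ Cb + 2*K*Cb := by
          have u1 : |deriv (deriv (deriv θ)) x * Real.sin (K*x)| ≤ Cb := by
            have := abs_term_bound 1 (deriv (deriv (deriv θ)) x) (Real.sin (K*x)) Cb
              zero_le_one (hCbθ3 x) (Real.abs_sin_le_one _)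
            simpa using this
          have u2 : |2*K*deriv (deriv θ) x * Real.cos (K*x)| ≤ 2*K*Cb :=
            abs_term_bound (2*K) _ _ Cb h2Ks (hCbθ2 x) (Real.abs_cos_le_one _)
          exact (abs_add_le _ _).trans (add_le_add u1 u2)
        have : |2*K*s| = 2*K*s := abs_of_nonneg hKs
        rw [this]
        exact mul_le_mul_of_nonneg_left hin hKs
      calc |(-(deriv (deriv θ) x)) * Real.cos (K*x)
            + 2*K*s*(deriv (deriv (deriv θ)) x * Real.sin (K*x)
              + 2*K*deriv (deriv θ) x * Real.cos (K*x))|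
          ≤ |(-(deriv (deriv θ) x)) * Real.cos (K*x)|
            + |2*K*s*(deriv (deriv (deriv θ)) x * Real.sin (K*x)
              + 2*K*deriv (deriv θ) x * Real.cos (K*x))| := abs_add_le _ _
        _ ≤ Cb + 2*K*s*(Cb + 2*K*Cb) := add_le_add t1 t2
    have h1 : |Fr s x| ≤ M₀ * |vapp K θ s x| + |vappT K θ s x - vappXX K θ s x| := by
      have hsh : Fr s x = W s x * vapp K θ s x - (vappT K θ s x - vappXX K θ s x) := rfl
      rw [hsh]
      have h2 : |W s x| * |vapp K θ s x| ≤ M₀ * |vapp K θ s x| :=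
        mul_le_mul_of_nonneg_right hW (abs_nonneg _)
      calc |W s x * vapp K θ s x - (vappT K θ s x - vappXX K θ s x)|
          ≤ |W s x * vapp K θ s x| + |vappT K θ s x - vappXX K θ s x| := abs_sub _ _
        _ ≤ M₀ * |vapp K θ s x| + |vappT K θ s x - vappXX K θ s x| := by
            rw [abs_mul]; exact add_le_add h2 le_rfl
    have h3 : M₀ * |vapp K θ s x| + |vappT K θ s x - vappXX K θ s x|
        ≤ M₀ * (Real.exp (-K^2*s) * (Cb + 2*K*s*Cb))
          + Real.exp (-K^2*s) * (Cb + 2*K*s*(Cb + 2*K*Cb)) :=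
      add_le_add (mul_le_mul_of_nonneg_left hv hM₀) hR
    refine (h1.trans h3).trans ?_
    have hKKs : 0 ≤ (K^2 - K)*s*Cb := by
      apply mul_nonneg (mul_nonneg (sub_nonneg.mpr hKK) hss) hCb0
    have hKKsM : 0 ≤ (K^2 - K)*s*Cb*M₀ := mul_nonneg hKKs hM₀
    rw [hAdef, hBcdef]
    nlinarith [he.le, mul_le_mul_of_nonneg_left hKKs he.le,
      mul_le_mul_of_nonneg_left hKKsM he.le, mul_pos he hK2pos]
  -- E is continuous on [0,T]
  have hIoc : Set.uIoc (0:ℝ) π = Ioc 0 π := Set.uIoc_of_le Real.pi_pos.le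
  have huIcc : Set.uIcc (0:ℝ) π = Icc 0 π := Set.uIcc_of_le Real.pi_pos.le
  have h00 : ((0:ℝ),(0:ℝ)) ∈ Icc (0:ℝ) T ×ˢ Icc (0:ℝ) π :=
    Set.mk_mem_prod ⟨le_refl _, hT.le⟩ ⟨le_refl _, Real.pi_pos.le⟩
  have hCh0 : 0 ≤ Ch := (abs_nonneg _).trans (hCh _ h00)
  have hCht0 : 0 ≤ Cht := (abs_nonneg _).trans (hCht _ h00)
  have hEc : ContinuousOn E (Icc 0 T) := by
    intro s₀ hs₀
    show ContinuousWithinAt E (Icc 0 T) s₀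
    have : E = fun s => ∫ x in (0:ℝ)..π, (r s x)^2 := rfl
    rw [this]
    apply intervalIntegral.continuousWithinAt_of_dominated_interval
      (bound := fun _ => Ch^2)
    · filter_upwards [self_mem_nhdsWithin] with s hs
      rw [hIoc]
      exact (((hslice _ hrc s hs).pow 2).mono Ioc_subset_Icc_self).aestronglyMeasurable
        measurableSet_Ioc
    · filter_upwards [self_mem_nhdsWithin] with s hs
      apply ae_of_all
      intro x hxm
      rw [hIoc] at hxm
      have hb := hCh (s, x) (Set.mk_mem_prod hs (Ioc_subset_Icc_self hxm))
      simp only [Real.norm_eq_abs, abs_pow]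
      exact pow_le_pow_left₀ (abs_nonneg _) hb 2
    · exact intervalIntegrable_const
    · apply ae_of_all
      intro x hxm
      rw [hIoc] at hxm
      exact ((htslice _ hrc x (Ioc_subset_Icc_self hxm)).pow 2) s₀ hs₀
  have hE' : ∀ s ∈ Ioo (0:ℝ) T, HasDerivAt E (G s) s := by
    intro s₀ hs₀
    set ε := min s₀ (T - s₀) with hεdef
    have hε : 0 < ε := lt_min hs₀.1 (sub_pos.mpr hs₀.2)
    have hball : Metric.ball s₀ ε ⊆ Icc 0 T := by
      intro u hu
      rw [Real.ball_eq_Ioo] at hu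
      have h1 := min_le_left s₀ (T - s₀)
      have h2 := min_le_right s₀ (T - s₀)
      exact ⟨by linarith [hu.1], by linarith [hu.2]⟩
    have key := intervalIntegral.hasDerivAt_integral_of_dominated_loc_of_deriv_le
      (μ := volume) (F := fun s x => (r s x)^2) (F' := fun s x => 2 * r s x * rr s x)
      (a := 0) (b := π) (x₀ := s₀) (bound := fun _ => 2*Ch*Cht) (s := Metric.ball s₀ ε) (Metric.ball_mem_nhds s₀ hε)
      ?_ ?_ ?_ ?_ ?_ ?_
    · exact key.2
    · filter_upwards [Metric.ball_mem_nhds s₀ hε] with s hs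
      rw [hIoc]
      exact (((hslice _ hrc s (hball hs)).pow 2).mono Ioc_subset_Icc_self).aestronglyMeasurable
        measurableSet_Ioc
    · apply ContinuousOn.intervalIntegrable
      rw [huIcc]
      exact (hslice _ hrc s₀ (Ioo_subset_Icc_self hs₀)).pow 2
    · rw [hIoc]
      have hcon : ContinuousOn (fun x => 2 * r s₀ x * rr s₀ x) (Icc 0 π) :=
        (continuousOn_const.mul (hslice _ hrc s₀ (Ioo_subset_Icc_self hs₀))).mul
          (hslice _ hrrc s₀ (Ioo_subset_Icc_self hs₀))
      exact (hcon.mono Ioc_subset_Icc_self).aestronglyMeasurable measurableSet_Ioc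
    · apply ae_of_all
      intro x hxm s hs
      rw [hIoc] at hxm
      have hb1 := hCh (s, x) (Set.mk_mem_prod (hball hs) (Ioc_subset_Icc_self hxm))
      have hb2 := hCht (s, x) (Set.mk_mem_prod (hball hs) (Ioc_subset_Icc_self hxm))
      simp only [Real.norm_eq_abs]
      have : |2 * r s x * rr s x| = 2 * |r s x| * |rr s x| := by
        rw [abs_mul, abs_mul]; norm_num
      rw [this]
      have := mul_le_mul hb1 hb2 (abs_nonneg _) hCh0
      nlinarith [abs_nonneg (r s x), abs_nonneg (rr s x)]
    · exact intervalIntegrable_const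
    · apply ae_of_all
      intro x hxm s hs
      rw [hIoc] at hxm
      have hd1 := hdt s (hball hs) x (Ioc_subset_Icc_self hxm)
      have hd2 := hasDerivAt_vapp_t K θ s x
      have hd : HasDerivAt (fun s' => r s' x) (rr s x) s := hd1.sub hd2
      have := hd.pow 2
      refine this.congr_deriv ?_
      simp only [Nat.cast_ofNat]
      ring
  -- E(0) = 0
  have hE0 : E 0 = 0 := by
    show (∫ x in (0:ℝ)..π, (r 0 x)^2) = 0
    rw [intervalIntegral.integral_congr (g := fun _ => (0:ℝ))
      (fun x hxm => by rw [Set.uIcc_of_le Real.pi_pos.le] at hxm; simp [hr0 x hxm])]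
    simp
  -- the key differential inequality
  have hrxc : ContinuousOn (fun p : ℝ × ℝ => rx p.1 p.2) (Icc 0 T ×ˢ Icc 0 π) :=
    hhxc.sub hvxc.continuousOn
  have hrxxc : ContinuousOn (fun p : ℝ × ℝ => rxx p.1 p.2) (Icc 0 T ×ˢ Icc 0 π) :=
    hhxxc.sub hvxxc.continuousOn
  have hII : ∀ (f : ℝ → ℝ), ContinuousOn f (Icc 0 π) → IntervalIntegrable f volume 0 π := by
    intro f hf
    apply ContinuousOn.intervalIntegrable
    rw [huIcc]
    exact hf
  have hGle : ∀ s ∈ Ioo (0:ℝ) T, G s ≤ βf s * E s + gf s := by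
    intro s hsIoo
    have hsIcc : s ∈ Icc (0:ℝ) T := Ioo_subset_Icc_self hsIoo
    have hss : (0:ℝ) ≤ s := hsIcc.1
    have hrs := hslice _ hrc s hsIcc
    have hrrs := hslice _ hrrc s hsIcc
    have hrxs := hslice _ hrxc s hsIcc
    have hrxxs := hslice _ hrxxc s hsIcc
    have hWs := hslice _ hWcont s hsIcc
    have hvs : ContinuousOn (fun x => vapp K θ s x) (Icc 0 π) :=
      hslice _ hvc.continuousOn s hsIcc
    have hvts : ContinuousOn (fun x => vappT K θ s x) (Icc 0 π) :=
      hslice _ hvtc.continuousOn s hsIcc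
    have hvxxs : ContinuousOn (fun x => vappXX K θ s x) (Icc 0 π) :=
      hslice _ hvxxc.continuousOn s hsIcc
    have hFrs : ContinuousOn (fun x => Fr s x) (Icc 0 π) :=
      (hWs.mul hvs).sub (hvts.sub hvxxs)
    set av : ℝ := K^2*Real.exp (-(K^2/2)*s) with havdef
    have hav : 0 < av := by rw [havdef]; positivity
    set φv : ℝ := Real.exp (-K^2*s) * (A + Bc*(K^2*s)) with hφdef
    -- integrability of the pieces
    have hI1 : IntervalIntegrable (fun x => 2 * r s x * rxx s x) volume 0 π :=
      hII _ ((continuousOn_const.mul hrs).mul hrxxs)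
    have hI2 : IntervalIntegrable (fun x => 2*W s x*(r s x)^2 + 2*r s x*Fr s x) volume 0 π :=
      hII _ (((continuousOn_const.mul hWs).mul (hrs.pow 2)).add
        ((continuousOn_const.mul hrs).mul hFrs))
    have hIrx2 : IntervalIntegrable (fun x => rx s x * rx s x) volume 0 π :=
      hII _ (hrxs.mul hrxs)
    have hIrhs : IntervalIntegrable
        (fun x => (2*M₀ + av)*(r s x)^2 + φv^2/av) volume 0 π :=
      hII _ ((continuousOn_const.mul (hrs.pow 2)).add continuousOn_const)
    -- split G
    have e1 : G s = (∫ x in (0:ℝ)..π, 2 * r s x * rxx s x)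
        + ∫ x in (0:ℝ)..π, (2*W s x*(r s x)^2 + 2*r s x*Fr s x) := by
      have : G s = ∫ x in (0:ℝ)..π, 2 * r s x * rr s x := rfl
      rw [this, ← intervalIntegral.integral_add hI1 hI2]
      apply intervalIntegral.integral_congr
      intro x hxm
      rw [huIcc] at hxm
      have hp := hptw s hsIcc x hxm
      linear_combination (2 * r s x) * hp
    -- integration by parts
    have hu : ∀ x ∈ Set.uIcc (0:ℝ) π, HasDerivAt (fun y => r s y) (rx s x) x := by
      intro x hxm
      rw [huIcc] at hxm
      exact (hdx s hsIcc x hxm).sub (hasDerivAt_vapp_x K θ hθ s x)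
    have hv : ∀ x ∈ Set.uIcc (0:ℝ) π, HasDerivAt (fun y => rx s y) (rxx s x) x := by
      intro x hxm
      rw [huIcc] at hxm
      exact (hdxx s hsIcc x hxm).sub (hasDerivAt_vappX_x K θ hθ s x)
    have hIrx : IntervalIntegrable (fun x => rx s x) volume 0 π := hII _ hrxs
    have hIrxx : IntervalIntegrable (fun x => rxx s x) volume 0 π := hII _ hrxxs
    have ibp := intervalIntegral.integral_mul_deriv_eq_deriv_mul hu hv hIrx hIrxx
    obtain ⟨hrx0, hrxπ⟩ := hrxbd s hsIcc
    have e2 : (∫ x in (0:ℝ)..π, 2 * r s x * rxx s x)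
        = -2 * ∫ x in (0:ℝ)..π, rx s x * rx s x := by
      have hfe : (fun x => 2 * r s x * rxx s x) = fun x => 2*(r s x * rxx s x) := by
        funext x; ring
      rw [hfe, intervalIntegral.integral_const_mul, ibp, hrx0, hrxπ]
      ring
    have e2' : (∫ x in (0:ℝ)..π, 2 * r s x * rxx s x) ≤ 0 := by
      rw [e2]
      have : 0 ≤ ∫ x in (0:ℝ)..π, rx s x * rx s x :=
        intervalIntegral.integral_nonneg Real.pi_pos.le (fun x _ => mul_self_nonneg _)
      linarith
    -- pointwise bound of the second integrand
    have e3 : (∫ x in (0:ℝ)..π, (2*W s x*(r s x)^2 + 2*r s x*Fr s x))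
        ≤ ∫ x in (0:ℝ)..π, ((2*M₀ + av)*(r s x)^2 + φv^2/av) := by
      apply intervalIntegral.integral_mono_on Real.pi_pos.le hI2 hIrhs
      intro x hxm
      have hFx := hFb s hsIcc x hxm
      have hWx := hWbdd s hsIcc x hxm
      have habs := abs_le.mp hFx
      have habsW := abs_le.mp hWx
      have y1 : 2*(r s x)*(Fr s x) ≤ av*(r s x)^2 + (Fr s x)^2/av :=
        young_ineq (r s x) (Fr s x) av hav
      have y2 : (Fr s x)^2 ≤ φv^2 := sq_le_sq' (by linarith [habs.1]) habs.2
      have y3 : (Fr s x)^2/av ≤ φv^2/av := by gcongr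
      have y4 : 2*W s x*(r s x)^2 ≤ 2*M₀*(r s x)^2 := by
        nlinarith [sq_nonneg (r s x)]
      nlinarith
    -- evaluate the dominating integral
    have e4 : (∫ x in (0:ℝ)..π, ((2*M₀ + av)*(r s x)^2 + φv^2/av))
        = (2*M₀ + av) * E s + π * (φv^2/av) := by
      rw [intervalIntegral.integral_add (hII (fun x => (2*M₀ + av)*(r s x)^2) (continuousOn_const.mul (hrs.pow 2)))
        intervalIntegrable_const,
        intervalIntegral.integral_const_mul, intervalIntegral.integral_const]
      have : E s = ∫ x in (0:ℝ)..π, (r s x)^2 := rfl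
      rw [← this]
      simp [smul_eq_mul]
    -- identify with gf
    have e5 : π * (φv^2/av) = gf s := by
      have hrel : Real.exp (-K^2*s)^2
          = Real.exp (-(3/2)*(K^2*s)) * Real.exp (-(K^2/2)*s) := by
        rw [sq, ← Real.exp_add, ← Real.exp_add]
        ring_nf
      have : gf s = π * Real.exp (-(3/2)*(K^2*s)) * (A + Bc*(K^2*s))^2 / K^2 := rfl
      rw [this, hφdef, havdef, mul_pow, hrel]
      have he2 := Real.exp_ne_zero (-(K^2/2)*s)
      field_simp
    have hβs : βf s = 2*M₀ + av := rfl
    rw [hβs, e1]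
    rw [e5] at e4
    linarith [e2', e3, e4.le, e4.ge]
  -- Gronwall
  have hBf' : ∀ s ∈ Ioo (0:ℝ) T, HasDerivAt Bf (βf s) s := by
    intro s _
    have h1 : HasDerivAt (fun w : ℝ => -(K^2/2)*w) (-(K^2/2)) s := by
      simpa using (hasDerivAt_id s).const_mul (-(K^2/2))
    have h2 := (h1.exp).const_mul (2:ℝ)
    have h3 : HasDerivAt (fun w : ℝ => 2*M₀*w + 2) (2*M₀) s := by
      simpa using ((hasDerivAt_id s).const_mul (2*M₀)).add_const 2
    have := h3.sub h2
    refine this.congr_deriv ?_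
    simp only [hβdef]; ring
  have hgc : Continuous gf := by rw [hgdef]; fun_prop
  have hBfc : Continuous Bf := by rw [hBfdef]; fun_prop
  have hBf0 : Bf 0 = 0 := by simp [hBfdef]
  have hEle := gronwall_aux hT E G βf gf Bf hEc hE0 hE' hgc hBfc hBf' hBf0 hGle t htmem
  -- final numeric estimate
  have hfinal : E t ≤ Cfin / K^4 := by
    have ht0 : (0:ℝ) ≤ t := htmem.1
    have hgfnn : ∀ s, 0 ≤ gf s := by
      intro s
      have hq : gf s = π * Real.exp (-(3/2)*(K^2*s)) * (A + Bc*(K^2*s))^2 / K^2 := rfl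
      rw [hq]; positivity
    have hψc : Continuous (fun s => Real.exp (-(Bf s)) * gf s) := by
      apply Continuous.mul _ hgc
      exact Real.continuous_exp.comp hBfc.neg
    have hconst : (0:ℝ) ≤ 2*π*(A^2+Bc^2)/K^2 := by positivity
    have ptw : ∀ s ∈ Icc (0:ℝ) t, Real.exp (-(Bf s)) * gf s
        ≤ (2*π*(A^2+Bc^2)/K^2) * Real.exp (-(K^2/2)*s) := by
      intro s hsm
      have hs0 : (0:ℝ) ≤ s := hsm.1
      have hexple : Real.exp (-(K^2/2)*s) ≤ 1 := by
        rw [Real.exp_le_one_iff]; nlinarith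
      have hBfnn : 0 ≤ Bf s := by
        have hq : Bf s = 2*M₀*s + 2 - 2*Real.exp (-(K^2/2)*s) := rfl
        rw [hq]; nlinarith
      have he1 : Real.exp (-(Bf s)) ≤ 1 := by
        rw [Real.exp_le_one_iff]; linarith
      have hu : (0:ℝ) ≤ K^2*s := by positivity
      have k1 : (A + Bc*(K^2*s))^2 ≤ 2*A^2 + 2*Bc^2*(K^2*s)^2 := by
        nlinarith [sq_nonneg (A - Bc*(K^2*s))]
      have k3 : (K^2*s)^2*Real.exp (-(K^2*s)) ≤ 1 := usq_exp_le (K^2*s) hu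
      have k4 : Real.exp (-(K^2*s)) ≤ 1 := by
        rw [Real.exp_le_one_iff]; linarith
      have k2 : Real.exp (-(3/2)*(K^2*s))
          = Real.exp (-(K^2*s)) * Real.exp (-(K^2/2)*s) := by
        rw [← Real.exp_add]; ring_nf
      have inner : Real.exp (-(3/2)*(K^2*s)) * (A + Bc*(K^2*s))^2
          ≤ (2*A^2 + 2*Bc^2) * Real.exp (-(K^2/2)*s) := by
        rw [k2]
        have e1 : Real.exp (-(K^2*s)) * (A + Bc*(K^2*s))^2 ≤ 2*A^2 + 2*Bc^2 := by
          have h5 := mul_le_mul_of_nonneg_left k1 (Real.exp_pos (-(K^2*s))).le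
          nlinarith [sq_nonneg A, sq_nonneg Bc, Real.exp_pos (-(K^2*s))]
        calc Real.exp (-(K^2*s)) * Real.exp (-(K^2/2)*s) * (A + Bc*(K^2*s))^2
            = (Real.exp (-(K^2*s)) * (A + Bc*(K^2*s))^2) * Real.exp (-(K^2/2)*s) := by
              ring
          _ ≤ (2*A^2 + 2*Bc^2) * Real.exp (-(K^2/2)*s) :=
              mul_le_mul_of_nonneg_right e1 (Real.exp_pos _).le
      have hgfv : gf s = π * Real.exp (-(3/2)*(K^2*s)) * (A + Bc*(K^2*s))^2 / K^2 := rfl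
      calc Real.exp (-(Bf s)) * gf s ≤ 1 * gf s :=
            mul_le_mul_of_nonneg_right he1 (hgfnn s)
        _ = (Real.exp (-(3/2)*(K^2*s)) * (A + Bc*(K^2*s))^2) * (π/K^2) := by
            rw [one_mul, hgfv]; ring
        _ ≤ ((2*A^2 + 2*Bc^2) * Real.exp (-(K^2/2)*s)) * (π/K^2) := by
            apply mul_le_mul_of_nonneg_right inner
            positivity
        _ = (2*π*(A^2+Bc^2)/K^2) * Real.exp (-(K^2/2)*s) := by ring
    have hc2 : Continuous (fun s : ℝ => (2*π*(A^2+Bc^2)/K^2) * Real.exp (-(K^2/2)*s)) := by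
      fun_prop
    have hint1 : IntervalIntegrable (fun s => Real.exp (-(Bf s)) * gf s) volume 0 t :=
      hψc.intervalIntegrable 0 t
    have hint2 : IntervalIntegrable
        (fun s : ℝ => (2*π*(A^2+Bc^2)/K^2) * Real.exp (-(K^2/2)*s)) volume 0 t :=
      hc2.intervalIntegrable 0 t
    have hmono := intervalIntegral.integral_mono_on ht0 hint1 hint2 ptw
    have hci : (∫ s in (0:ℝ)..t, (2*π*(A^2+Bc^2)/K^2) * Real.exp (-(K^2/2)*s))
        = (2*π*(A^2+Bc^2)/K^2) * ∫ s in (0:ℝ)..t, Real.exp (-(K^2/2)*s) :=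
      intervalIntegral.integral_const_mul _ _
    have hexpint := integral_exp_neg_le (K^2/2) t (by positivity) ht0
    have hIle : (∫ s in (0:ℝ)..t, Real.exp (-(Bf s)) * gf s) ≤ 4*π*(A^2+Bc^2)/K^4 := by
      refine hmono.trans ?_
      rw [hci]
      have := mul_le_mul_of_nonneg_left hexpint hconst
      refine this.trans ?_
      rw [show (1:ℝ)/(K^2/2) = 2/K^2 by field_simp]
      rw [show 2*π*(A^2+Bc^2)/K^2 * (2/K^2) = 4*π*(A^2+Bc^2)/K^4 by field_simp; ring]
    have hψnn : 0 ≤ ∫ s in (0:ℝ)..t, Real.exp (-(Bf s)) * gf s :=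
      intervalIntegral.integral_nonneg ht0
        (fun s _ => mul_nonneg (Real.exp_pos _).le (hgfnn s))
    have hBfle : Real.exp (Bf t) ≤ Real.exp (2*M₀*T+2) := by
      apply Real.exp_le_exp.mpr
      have hq : Bf t = 2*M₀*t + 2 - 2*Real.exp (-(K^2/2)*t) := rfl
      rw [hq]
      nlinarith [Real.exp_pos (-(K^2/2)*t), htmem.1, htmem.2]
    calc E t ≤ Real.exp (Bf t) * ∫ s in (0:ℝ)..t, Real.exp (-(Bf s)) * gf s := hEle
      _ ≤ Real.exp (2*M₀*T+2) * (4*π*(A^2+Bc^2)/K^4) :=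
          mul_le_mul hBfle hIle hψnn (Real.exp_pos _).le
      _ = Cfin / K^4 := by rw [hCfdef]; ring
  -- conclude
  have hgoal : Real.sqrt (E t) ≤ (Real.sqrt Cfin + 1) / K^2 := by
    have h1 : Real.sqrt (E t) ≤ Real.sqrt (Cfin / K^4) := Real.sqrt_le_sqrt hfinal
    have h2 : Real.sqrt (Cfin / K^4) = Real.sqrt Cfin / K^2 := by
      rw [show K^4 = (K^2)^2 by ring, Real.sqrt_div hCfin0, Real.sqrt_sq hK2pos.le]
    rw [h2] at h1
    refine h1.trans ?_
    gcongr
    linarith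
  have hEq : (∫ x in (0:ℝ)..π,
      (h t x - Real.exp (-(k : ℝ) ^ 2 * t) *
        (θ x * Real.cos (k * x) - 2 * (k : ℝ) * t * deriv θ x * Real.sin (k * x))) ^ 2) = E t := by
    simp only [hEdef, hrdef, vapp, hKdef]
  rw [hEq]
  exact hgoal
end

section
/- Let T > 0, let F : [0,T] × [0,π] → ℝ be continuous, and let θ : [0,π] → ℝ be continuous. Then k² ∫₀ᵀ ∫₀^π F(t,x) θ(x)² cos(kx)² e^{-2 k² t} dx dt → (1/4) ∫₀^π F(0,x) θ(x)² dx as the integer k → ∞. -/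
open Real Set Filter MeasureTheory intervalIntegral Topology
open scoped Interval FourierTransform

/-!
Put `g k t = ∫₀^π F(t,x) θ(x)² cos²(kx) dx`. Uniform continuity of `F` on the rectangle makes
`g k t → g k 0` as `t → 0⁺` uniformly in `k`, and the Riemann–Lebesgue lemma together with
`cos² y = (1 + cos 2y) / 2` gives `g k 0 → ½ ∫₀^π F(0,x) θ(x)² dx`; so `g k t` has this limit
jointly as `k → ∞`, `t → 0⁺`. The substitution `s = 2k²t` turns `2k² ∫₀ᵀ g k t e^{-2k²t} dt`
into `∫₀^{2k²T} g k (s / 2k²) e^{-s} ds`, whose integrand converges pointwise to the limit of `g`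
times `e^{-s}` under the domination `C e^{-s}`; the leftover factor `½` gives `¼`.
-/

theorem tendsto_integral_mul_cos_cocompact {f : ℝ → ℝ} (hf : Integrable f) :
    Tendsto (fun r => ∫ x, f x * cos (r * x)) (cocompact ℝ) (𝓝 0) := by
  have hscale : Tendsto (fun r : ℝ => r * (2 * π)⁻¹) (cocompact ℝ) (cocompact ℝ) :=
    tendsto_cocompact_mul_right₀ (by positivity)
  have hRL := (Complex.continuous_re.tendsto 0).comp
    ((Real.tendsto_integral_exp_smul_cocompact fun x => (f x : ℂ)).comp hscale)
  rw [Complex.zero_re] at hRL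
  refine hRL.congr fun r => ?_
  -- the real part of the Fourier integral at frequency `r / 2π`
  have hint : Integrable (fun x : ℝ => 𝐞 (-(x * (r * (2 * π)⁻¹))) • (f x : ℂ)) := by
    refine hf.norm.mono' ?_ (ae_of_all _ fun x => ?_)
    · fun_prop
    · simp
  have hre := integral_re hint
  simp only [RCLike.re_to_complex] at hre
  rw [Function.comp_apply, Function.comp_apply, ← hre]
  congr 1 with x
  rw [Circle.smul_def, Real.fourierChar_apply, smul_eq_mul, Complex.re_mul_ofReal,
    Complex.exp_ofReal_mul_I_re, mul_comm]
  have harg : 2 * π * -(x * (r * (2 * π)⁻¹)) = -(r * x) := by field_simp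
  rw [harg, cos_neg]

theorem tendsto_intervalIntegral_mul_cos_cocompact {f : ℝ → ℝ} {a b : ℝ}
    (hf : IntervalIntegrable f volume a b) :
    Tendsto (fun r => ∫ x in a..b, f x * cos (r * x)) (cocompact ℝ) (𝓝 0) := by
  have hRL := (tendsto_integral_mul_cos_cocompact
    ((integrable_indicator_iff measurableSet_uIoc).2 (intervalIntegrable_iff.1 hf))).const_smul
      (if a ≤ b then (1 : ℝ) else -1)
  rw [smul_zero] at hRL
  refine hRL.congr fun r => ?_
  rw [intervalIntegral_eq_integral_uIoc, ← MeasureTheory.integral_indicator measurableSet_uIoc]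
  simp only [indicator_mul_left]

theorem tendsto_intervalIntegral_mul_cos_sq_cocompact {f : ℝ → ℝ} {a b : ℝ}
    (hf : IntervalIntegrable f volume a b) :
    Tendsto (fun r => ∫ x in a..b, f x * cos (r * x) ^ 2) (cocompact ℝ)
      (𝓝 ((1 / 2) * ∫ x in a..b, f x)) := by
  have hRL := ((tendsto_intervalIntegral_mul_cos_cocompact hf).comp
    (tendsto_cocompact_mul_left₀ (two_ne_zero (α := ℝ)))).const_mul (1 / 2 : ℝ)
  rw [mul_zero] at hRL
  rw [← add_zero ((1 / 2) * ∫ x in a..b, f x)]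
  refine (hRL.const_add _).congr fun r => ?_
  rw [Function.comp_apply, ← intervalIntegral.integral_const_mul,
    ← intervalIntegral.integral_const_mul,
    ← integral_add (hf.const_mul _) ((hf.mul_continuousOn (by fun_prop)).const_mul _)]
  congr 1 with x
  rw [cos_sq, mul_assoc 2 r x]
  ring

theorem mul_intervalIntegral_mul_exp_neg_eq_setIntegral {g : ℝ → ℝ} {c T : ℝ} (hc : 0 < c)
    (hT : 0 ≤ T) :
    c * ∫ t in 0..T, g t * exp (-(c * t))
      = ∫ s in Ioi 0, (Iic (c * T)).indicator (fun s => g (s / c) * exp (-s)) s := by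
  rw [setIntegral_indicator measurableSet_Iic, Ioi_inter_Iic,
    ← intervalIntegral.integral_of_le (by positivity)]
  have hsub := smul_integral_comp_mul_left (fun s => g (s / c) * exp (-s)) c (a := 0) (b := T)
  rw [mul_zero, smul_eq_mul] at hsub
  rw [← hsub]
  simp_rw [mul_div_cancel_left₀ _ hc.ne']

theorem tendsto_mul_intervalIntegral_mul_exp_neg {ι : Type*} {l : Filter ι}
    [l.IsCountablyGenerated] {g : ι → ℝ → ℝ} {c : ι → ℝ} {T C L : ℝ} (hT : 0 < T)
    (hc : Tendsto c l atTop) (hg : ∀ i, ContinuousOn (g i) (Icc 0 T))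
    (hC : ∀ i, ∀ t ∈ Icc 0 T, ‖g i t‖ ≤ C)
    (hL : Tendsto (fun q : ι × ℝ => g q.1 q.2) (l ×ˢ 𝓝[≥] 0) (𝓝 L)) :
    Tendsto (fun i => c i * ∫ t in 0..T, g i t * exp (-(c i * t))) l (𝓝 L) := by
  set φ : ι → ℝ → ℝ := fun i => (Iic (c i * T)).indicator (fun s => g i (s / c i) * exp (-s))
  have hc_pos : ∀ᶠ i in l, 0 < c i := hc.eventually_gt_atTop 0
  have hmaps : ∀ i, 0 < c i → MapsTo (fun s => s / c i) (Iic (c i * T) ∩ Ioi 0) (Icc 0 T) :=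
    fun i hi s ⟨hsT, hs0⟩ => ⟨div_nonneg (le_of_lt hs0) hi.le, (div_le_iff₀' hi).2 hsT⟩
  have hmeas : ∀ᶠ i in l, AEStronglyMeasurable (φ i) (volume.restrict (Ioi 0)) := by
    filter_upwards [hc_pos] with i hi
    rw [aestronglyMeasurable_indicator_iff measurableSet_Iic,
      Measure.restrict_restrict measurableSet_Iic]
    refine ContinuousOn.aestronglyMeasurable ?_ (measurableSet_Iic.inter measurableSet_Ioi)
    exact ((hg i).comp (continuousOn_id.div_const _) (hmaps i hi)).mul (by fun_prop)
  have hbound : ∀ᶠ i in l, ∀ᵐ s ∂volume.restrict (Ioi 0), ‖φ i s‖ ≤ C * exp (-s) := by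
    filter_upwards [hc_pos] with i hi
    refine (ae_restrict_mem measurableSet_Ioi).mono fun s hs => ?_
    have hC0 : 0 ≤ C := (norm_nonneg _).trans (hC i 0 ⟨le_rfl, hT.le⟩)
    simp only [φ]
    by_cases hsT : s ∈ Iic (c i * T)
    · rw [indicator_of_mem hsT, norm_mul, norm_of_nonneg (exp_pos _).le]
      exact mul_le_mul_of_nonneg_right (hC i _ (hmaps i hi ⟨hsT, hs⟩)) (exp_pos _).le
    · rw [indicator_of_notMem hsT, norm_zero]
      positivity
  have hlim : ∀ᵐ s ∂volume.restrict (Ioi 0), Tendsto (fun i => φ i s) l (𝓝 (L * exp (-s))) := by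
    refine (ae_restrict_mem measurableSet_Ioi).mono fun s (hs : 0 < s) => ?_
    have hshrink : Tendsto (fun i => s / c i) l (𝓝[≥] 0) :=
      tendsto_nhdsWithin_iff.2 ⟨tendsto_const_nhds.div_atTop hc,
        hc_pos.mono fun i hi => div_nonneg hs.le hi.le⟩
    refine ((hL.comp (tendsto_id.prodMk hshrink)).mul_const _).congr' ?_
    filter_upwards [hc.eventually_ge_atTop (s / T)] with i hi
    simp only [φ, indicator_of_mem (show s ∈ Iic (c i * T) from (div_le_iff₀ hT).1 hi)]
    rfl
  have hDCT := MeasureTheory.tendsto_integral_filter_of_dominated_convergence _ hmeas hbound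
    ((integrableOn_exp_neg_Ioi 0).const_mul C) hlim
  rw [MeasureTheory.integral_const_mul, integral_exp_neg_Ioi_zero, mul_one] at hDCT
  refine hDCT.congr' ?_
  filter_upwards [hc_pos] with i hi
  exact (mul_intervalIntegral_mul_exp_neg_eq_setIntegral hi hT.le).symm


theorem tendsto_prod_of_tendstoUniformly {ι α β : Type*} [UniformSpace β] {G : ι → α → β}
    {l : Filter ι} {p : Filter α} {a₀ : α} {L : β}
    (hu : TendstoUniformly (fun a i => G i a) (fun i => G i a₀) p)
    (h₀ : Tendsto (fun i => G i a₀) l (𝓝 L)) :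
    Tendsto (fun q : ι × α => G q.1 q.2) (l ×ˢ p) (𝓝 L) :=
  (h₀.comp tendsto_fst).congr_uniformity <|
    (tendstoUniformlyOnFilter_iff_tendsto.1 hu.tendstoUniformlyOnFilter).comp
      (tendsto_snd.prodMk tendsto_top)

section ParametricIntegral

variable {ι : Type*} {G : ℝ → ℝ → ℝ} {w : ι → ℝ → ℝ} {a b M : ℝ}

theorem tendstoUniformly_intervalIntegral_mul {s : Set ℝ} {t₀ : ℝ}
    (hG : ContinuousOn (Function.uncurry G) (s ×ˢ uIcc a b)) (ht₀ : t₀ ∈ s)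
    (hw : ∀ i, IntervalIntegrable (w i) volume a b) (hwM : ∀ i, ∀ x ∈ Ι a b, ‖w i x‖ ≤ M) :
    TendstoUniformly (fun t i => ∫ x in a..b, G t x * w i x)
      (fun i => ∫ x in a..b, G t₀ x * w i x) (𝓝[s] t₀) := by
  rw [Metric.tendstoUniformly_iff]
  intro ε hε
  set δ := ε / (|M| * |b - a| + 1)
  have hδ : 0 < δ := by positivity
  obtain ⟨v, hv, hvG⟩ :=
    isCompact_uIcc.mem_uniformity_of_prod hG ht₀ (Metric.dist_mem_uniformity hδ)
  have hint : ∀ t ∈ s, ∀ i, IntervalIntegrable (fun x => G t x * w i x) volume a b :=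
    fun t ht i => (hw i).continuousOn_mul
      (hG.comp (continuousOn_const.prodMk continuousOn_id) fun x hx => ⟨ht, hx⟩)
  filter_upwards [hv, self_mem_nhdsWithin] with t ht hts i
  rw [dist_eq_norm, ← integral_sub (hint t₀ ht₀ i) (hint t hts i)]
  calc ‖∫ x in a..b, (G t₀ x * w i x - G t x * w i x)‖ ≤ δ * |M| * |b - a| := by
        refine norm_integral_le_of_norm_le_const fun x hx => ?_
        rw [← sub_mul, norm_mul, ← dist_eq_norm, dist_comm]
        exact mul_le_mul (hvG t ht x (uIoc_subset_uIcc hx)).le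
          ((hwM i x hx).trans (le_abs_self M)) (abs_nonneg _) hδ.le
    _ < ε := by
        rw [mul_assoc, ← lt_div_iff₀' hδ, div_div_cancel₀ hε.ne']
        linarith

theorem exists_norm_intervalIntegral_mul_le {K : Set ℝ} (hK : IsCompact K)
    (hG : ContinuousOn (Function.uncurry G) (K ×ˢ uIcc a b))
    (hwM : ∀ i, ∀ x ∈ Ι a b, ‖w i x‖ ≤ M) :
    ∃ C, ∀ i, ∀ t ∈ K, ‖∫ x in a..b, G t x * w i x‖ ≤ C := by
  obtain ⟨C, hC⟩ := (hK.prod isCompact_uIcc).exists_bound_of_continuousOn hG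
  refine ⟨C * |M| * |b - a|, fun i t ht =>
    intervalIntegral.norm_integral_le_of_norm_le_const fun x hx => ?_⟩
  rw [norm_mul]
  exact mul_le_mul (hC (t, x) ⟨ht, uIoc_subset_uIcc hx⟩) ((hwM i x hx).trans (le_abs_self M))
    (abs_nonneg _) ((norm_nonneg _).trans (hC (t, x) ⟨ht, uIoc_subset_uIcc hx⟩))

end ParametricIntegral

/-- Evaluation of the leading term of the second derivative: for continuous `F`
and `θ`, `k² ∬ F(t,x) θ(x)² cos(kx)² e^{-2k²t} dx dt → (1/4) ∫₀^π F(0,x) θ(x)² dx`. -/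
theorem stmt_12 (T : ℝ) (hT : 0 < T) (F : ℝ → ℝ → ℝ)
    (hF : ContinuousOn (fun p : ℝ × ℝ => F p.1 p.2) (Icc 0 T ×ˢ Icc 0 π))
    (θ : ℝ → ℝ) (hθ : ContinuousOn θ (Icc 0 π)) :
    Tendsto
      (fun k : ℕ => (k : ℝ) ^ 2 * ∫ t in (0 : ℝ)..T, ∫ x in (0 : ℝ)..π,
        F t x * θ x ^ 2 * Real.cos (k * x) ^ 2 * Real.exp (-2 * (k : ℝ) ^ 2 * t))
      atTop (nhds ((1 / 4) * ∫ x in (0 : ℝ)..π, F 0 x * θ x ^ 2)) := by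
  set G : ℝ → ℝ → ℝ := fun t x => F t x * θ x ^ 2
  set w : ℕ → ℝ → ℝ := fun k x => cos (k * x) ^ 2
  have hG : ContinuousOn (Function.uncurry G) (Icc 0 T ×ˢ uIcc 0 π) := by
    rw [uIcc_of_le pi_pos.le]
    exact hF.mul ((hθ.comp continuousOn_snd fun p hp => hp.2).pow 2)
  have hw : ∀ k, IntervalIntegrable (w k) volume 0 π :=
    fun k => (by fun_prop : Continuous (w k)).intervalIntegrable _ _
  have hwM : ∀ k, ∀ x ∈ Ι 0 π, ‖w k x‖ ≤ 1 :=
    fun k x _ => by simpa [w] using cos_sq_le_one (k * x)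
  have hunif := fun t₀ (ht₀ : t₀ ∈ Icc 0 T) =>
    tendstoUniformly_intervalIntegral_mul hG ht₀ hw hwM
  obtain ⟨C, hC⟩ := exists_norm_intervalIntegral_mul_le isCompact_Icc hG hwM
  have hG₀ : IntervalIntegrable (G 0) volume 0 π :=
    (hG.comp (continuousOn_const.prodMk continuousOn_id) fun x hx => ⟨⟨le_rfl, hT.le⟩, hx⟩)
      |>.intervalIntegrable
  have hcos := (tendsto_intervalIntegral_mul_cos_sq_cocompact hG₀).comp
    (tendsto_natCast_atTop_atTop.mono_right atTop_le_cocompact)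
  have hjoint := tendsto_prod_of_tendstoUniformly (hunif 0 ⟨le_rfl, hT.le⟩) hcos
  rw [nhdsWithin_Icc_eq_nhdsGE hT] at hjoint
  have hc : Tendsto (fun k : ℕ => 2 * (k : ℝ) ^ 2) atTop atTop :=
    ((tendsto_pow_atTop two_ne_zero).comp tendsto_natCast_atTop_atTop).const_mul_atTop two_pos
  have hlap := tendsto_mul_intervalIntegral_mul_exp_neg hT hc
    (fun k t ht => (hunif t ht).tendsto_at k) hC hjoint
  convert hlap.const_mul (1 / 2) using 2 with k
  · rw [← mul_assoc, ← mul_assoc, one_div_mul_cancel two_ne_zero, one_mul]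
    congr 1
    refine integral_congr fun t _ => ?_
    simp only [G, w, ← intervalIntegral.integral_mul_const, neg_mul]
  · ring
end
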